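/- arXiv:1911.04181 — 4 statements merged into one kernel-verified Lean document; each statement's English description precedes it below -/
import Mathlib

section
/- The map ι : Γ₂ → Γ determined by a₁ ↦ q₂q₁, b₁ ↦ q₂q₃, a₂ ↦ q₅q₄, b₂ ↦ q₅q₆ is a well-defined group homomorphism (the relator [a₂,b₂][a₁,b₁] is sent to 1), is injective, and its image is a subgroup of index 2 in Γ. -/
/- Common setup: PSL(2,ℂ), its action on ℙ¹(ℂ), loxodromic/parabolic/elliptic elements,
elementary subgroups, surface groups, the pentagon group Γ and the embedding ι. -/

noncomputable section

open Matrix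

/-- `SL(2,ℂ)`. -/
abbrev SL2C : Type := Matrix.SpecialLinearGroup (Fin 2) ℂ

instance : TopologicalSpace SL2C := instTopologicalSpaceSubtype

/-- `PSL(2,ℂ)`, the quotient of `SL(2,ℂ)` by its center `{±I}`. -/
abbrev PSL2C : Type := SL2C ⧸ Subgroup.center SL2C

/-- The quotient map `SL(2,ℂ) → PSL(2,ℂ)`. -/
def projPSL : SL2C →* PSL2C := QuotientGroup.mk' (Subgroup.center SL2C)

/-- The complex projective line `ℙ¹(ℂ)`. -/
abbrev P1 : Type := Projectivization ℂ (Fin 2 → ℂ)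

/-- The square of the trace, well defined on `PSL(2,ℂ)`. -/
def trSq (g : PSL2C) : ℂ :=
  (Matrix.trace ((Quotient.out g : SL2C) : Matrix (Fin 2) (Fin 2) ℂ)) ^ 2

/-- `g` is loxodromic iff `tr² g` is not a real number in `[0,4]`. -/
def IsLoxodromic (g : PSL2C) : Prop := ¬ ∃ r : ℝ, 0 ≤ r ∧ r ≤ 4 ∧ trSq g = (r : ℂ)

/-- `g` is parabolic iff `g ≠ 1` and `tr² g = 4`. -/
def IsParabolic (g : PSL2C) : Prop := g ≠ 1 ∧ trSq g = 4

/-- `g` is elliptic iff `g ≠ 1` and `tr² g` is a real number in `[0,4)`. -/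
def IsElliptic (g : PSL2C) : Prop := g ≠ 1 ∧ ∃ r : ℝ, 0 ≤ r ∧ r < 4 ∧ trSq g = (r : ℂ)

lemma sl2_toLin'_injective (g : SL2C) :
    Function.Injective (Matrix.toLin' (g : Matrix (Fin 2) (Fin 2) ℂ)) := by
  intro v w h
  have h2 : Matrix.toLin' ((g⁻¹ : SL2C) : Matrix (Fin 2) (Fin 2) ℂ)
      (Matrix.toLin' ((g : SL2C) : Matrix (Fin 2) (Fin 2) ℂ) v) =
      Matrix.toLin' ((g⁻¹ : SL2C) : Matrix (Fin 2) (Fin 2) ℂ)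
      (Matrix.toLin' ((g : SL2C) : Matrix (Fin 2) (Fin 2) ℂ) w) := by rw [h]
  rwa [← Matrix.toLin'_mul_apply, ← Matrix.toLin'_mul_apply,
    ← Matrix.SpecialLinearGroup.coe_mul, inv_mul_cancel,
    Matrix.SpecialLinearGroup.coe_one, Matrix.toLin'_one, LinearMap.id_apply,
    LinearMap.id_apply] at h2

/-- The action of `PSL(2,ℂ)` on `ℙ¹(ℂ)` by Möbius transformations (independent of the
choice of representative, since the center acts trivially on lines). -/
def pslAct (g : PSL2C) (x : P1) : P1 :=
  Projectivization.map (Matrix.toLin' ((Quotient.out g : SL2C) : Matrix (Fin 2) (Fin 2) ℂ))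
    (sl2_toLin'_injective _) x

/-- A subgroup of `PSL(2,ℂ)` is elementary if it has a nonempty invariant subset of `ℙ¹(ℂ)`
with at most two elements, or its closure is compact. -/
def IsElementarySubgroup (G : Subgroup PSL2C) : Prop :=
  (∃ S : Set P1, S.Nonempty ∧ S.Finite ∧ S.ncard ≤ 2 ∧ ∀ g ∈ G, pslAct g '' S = S) ∨
    IsCompact (closure (G : Set PSL2C))

/-- A homomorphism to `PSL(2,ℂ)` is non-elementary if its image is non-elementary. -/
def IsNonElem {H : Type*} [Group H] (ρ : H →* PSL2C) : Prop :=
  ¬ IsElementarySubgroup ρ.range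

/-- `g` sends a fixed point of `h` to the other one. -/
def SendsFixedToOther (g h : PSL2C) : Prop :=
  ∃ p q : P1, p ≠ q ∧ pslAct h p = p ∧ pslAct h q = q ∧ (pslAct g p = q ∨ pslAct g q = p)

/-- `g` interchanges the two fixed points of `h`. -/
def InterchangesFixed (g h : PSL2C) : Prop :=
  ∃ p q : P1, p ≠ q ∧ pslAct h p = p ∧ pslAct h q = q ∧ pslAct g p = q ∧ pslAct g q = p

/-- `PSL(2,ℝ)` as a subgroup of `PSL(2,ℂ)`: the image of `SL(2,ℝ)`. -/
def PSL2R : Subgroup PSL2C :=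
  (projPSL.comp (Matrix.SpecialLinearGroup.map (n := Fin 2) Complex.ofRealHom)).range

/-- `γ₁, γ₂` generate a rank-two Schottky group: the induced map from the free group `F₂` is
injective, with discrete image, all of whose nontrivial elements are loxodromic. -/
def GeneratesSchottky (γ₁ γ₂ : PSL2C) : Prop :=
  Function.Injective (FreeGroup.lift ![γ₁, γ₂] : FreeGroup (Fin 2) →* PSL2C) ∧
    DiscreteTopology ((FreeGroup.lift ![γ₁, γ₂] : FreeGroup (Fin 2) →* PSL2C).range) ∧
    ∀ g ∈ (FreeGroup.lift ![γ₁, γ₂] : FreeGroup (Fin 2) →* PSL2C).range, g ≠ 1 → IsLoxodromic g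

/-- The commutator `[x,y] = y⁻¹x⁻¹yx` in a free group. -/
def commF {α : Type*} (x y : FreeGroup α) : FreeGroup α := y⁻¹ * x⁻¹ * y * x

/-- The surface relator `[a_g,b_g]⋯[a₁,b₁]`. -/
def surfaceRel (g : ℕ) : FreeGroup (Fin g × Bool) :=
  (((List.finRange g).reverse).map
    (fun i => commF (FreeGroup.of (i, false)) (FreeGroup.of (i, true)))).prod

/-- The genus-`g` surface group `Γ_g`. -/
abbrev SurfaceGroup (g : ℕ) : Type :=
  PresentedGroup ({surfaceRel g} : Set (FreeGroup (Fin g × Bool)))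

/-- The generator `a_{i+1}` of `Γ_g`. -/
def sgA (g : ℕ) (i : Fin g) : SurfaceGroup g := PresentedGroup.of (i, false)

/-- The generator `b_{i+1}` of `Γ_g`. -/
def sgB (g : ℕ) (i : Fin g) : SurfaceGroup g := PresentedGroup.of (i, true)

/-- The genus-2 surface group `Γ₂`. -/
abbrev Gamma2 : Type := SurfaceGroup 2
def a1 : Gamma2 := sgA 2 0
def b1 : Gamma2 := sgB 2 0
def a2 : Gamma2 := sgA 2 1
def b2 : Gamma2 := sgB 2 1

/-- Relations for the group `Γ = ⟨q₁,…,q₆ ∣ qᵢ² = 1, q₁q₂q₃q₄q₅q₆ = 1⟩`. -/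
def pentagonRels : Set (FreeGroup (Fin 6)) :=
  (Set.range fun i : Fin 6 => FreeGroup.of i * FreeGroup.of i) ∪
    {((List.finRange 6).map FreeGroup.of).prod}

/-- The group `Γ = ⟨q₁,…,q₆ ∣ qᵢ² = 1, q₁q₂q₃q₄q₅q₆ = 1⟩`. -/
abbrev GammaP : Type := PresentedGroup pentagonRels

/-- The generator `q_{i+1}` of `Γ`. -/
def qgen (i : Fin 6) : GammaP := PresentedGroup.of i

lemma qgen_mul_self (i : Fin 6) : qgen i * qgen i = 1 := by
  have hmem : FreeGroup.of i * FreeGroup.of i ∈ pentagonRels :=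
    Set.mem_union_left _ ⟨i, rfl⟩
  have h : (PresentedGroup.mk pentagonRels (FreeGroup.of i * FreeGroup.of i)) = 1 :=
    (QuotientGroup.eq_one_iff _).mpr (Subgroup.subset_normalClosure hmem)
  rw [_root_.map_mul] at h
  exact h

lemma qgen_prod : qgen 0 * (qgen 1 * (qgen 2 * (qgen 3 * (qgen 4 * qgen 5)))) = 1 := by
  have hmem : ((List.finRange 6).map FreeGroup.of).prod ∈ pentagonRels :=
    Set.mem_union_right _ rfl
  have h : (PresentedGroup.mk pentagonRels (((List.finRange 6).map FreeGroup.of).prod)) = 1 :=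
    (QuotientGroup.eq_one_iff _).mpr (Subgroup.subset_normalClosure hmem)
  have h6 : List.finRange 6 = [0, 1, 2, 3, 4, 5] := by decide
  rw [h6] at h
  simp [mul_assoc] at h
  exact h

lemma pent_helper {G : Type*} [Group G] (x : Fin 6 → G) (hx : ∀ i, x i * x i = 1)
    (hp : x 0 * (x 1 * (x 2 * (x 3 * (x 4 * x 5)))) = 1) :
    (x 4 * x 5)⁻¹ * (x 4 * x 3)⁻¹ * (x 4 * x 5) * (x 4 * x 3) *
      ((x 1 * x 2)⁻¹ * (x 1 * x 0)⁻¹ * (x 1 * x 2) * (x 1 * x 0)) = 1 := by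
  have hinv : ∀ i, (x i)⁻¹ = x i := fun i => inv_eq_of_mul_eq_one_right (hx i)
  have hrev : x 5 * (x 4 * (x 3 * (x 2 * (x 1 * x 0)))) = 1 := by
    have h := congrArg (·⁻¹) hp
    simpa [_root_.mul_inv_rev, hinv, mul_assoc] using h
  have key : ∀ (i : Fin 6) (t : G), x i * (x i * t) = t := fun i t => by
    rw [← mul_assoc, hx, one_mul]
  have key2 : ∀ t : G, x 5 * (x 4 * (x 3 * (x 2 * (x 1 * (x 0 * t))))) = t := fun t => by
    calc x 5 * (x 4 * (x 3 * (x 2 * (x 1 * (x 0 * t)))))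
        = (x 5 * (x 4 * (x 3 * (x 2 * (x 1 * x 0))))) * t := by simp [mul_assoc]
      _ = t := by rw [hrev, one_mul]
  simp only [_root_.mul_inv_rev, hinv, mul_assoc]
  simp only [key, key2]
  exact hrev

/-- The images of the generators `a₁, b₁, a₂, b₂` under `ι`. -/
def pentMap : Fin 2 × Bool → GammaP
  | (0, false) => qgen 1 * qgen 0
  | (0, true) => qgen 1 * qgen 2
  | (1, false) => qgen 4 * qgen 3
  | (1, true) => qgen 4 * qgen 5

lemma surfaceRel_two :
    surfaceRel 2 = commF (FreeGroup.of ((1 : Fin 2), false)) (FreeGroup.of ((1 : Fin 2), true)) *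
      commF (FreeGroup.of ((0 : Fin 2), false)) (FreeGroup.of ((0 : Fin 2), true)) := by
  have h : List.finRange 2 = [0, 1] := by decide
  simp [surfaceRel, h]

/-- The embedding `ι : Γ₂ → Γ`, `a₁ ↦ q₂q₁`, `b₁ ↦ q₂q₃`, `a₂ ↦ q₅q₄`, `b₂ ↦ q₅q₆`. -/
def iota : Gamma2 →* GammaP :=
  PresentedGroup.toGroup (f := pentMap) (by
    intro r hr
    rw [Set.mem_singleton_iff] at hr
    subst hr
    rw [surfaceRel_two]
    simp only [commF, _root_.map_mul, _root_.map_inv, FreeGroup.lift_apply_of]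
    have h01 : pentMap ((0 : Fin 2), false) = qgen 1 * qgen 0 := rfl
    have h02 : pentMap ((0 : Fin 2), true) = qgen 1 * qgen 2 := rfl
    have h11 : pentMap ((1 : Fin 2), false) = qgen 4 * qgen 3 := rfl
    have h12 : pentMap ((1 : Fin 2), true) = qgen 4 * qgen 5 := rfl
    rw [h01, h02, h11, h12]
    exact pent_helper (fun i => qgen i) qgen_mul_self qgen_prod)

/-- A pentagon representation: a non-elementary `ρ : Γ₂ → PSL(2,ℂ)` extending to `Γ` with
exactly one `qᵢ` killed. -/
def IsPentagonRep (ρ : Gamma2 →* PSL2C) : Prop :=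
  IsNonElem ρ ∧ ∃ ρ' : GammaP →* PSL2C, ρ'.comp iota = ρ ∧ ∃! i : Fin 6, ρ' (qgen i) = 1

/-- A primitive element of the free group `F₂`: part of a free basis. -/
def IsPrimitiveF2 (γ : FreeGroup (Fin 2)) : Prop :=
  ∃ φ : MulAut (FreeGroup (Fin 2)), φ (FreeGroup.of 0) = γ

/-- `pp` and `pm` are the attracting resp. repelling fixed points of `α`: for a representative
`A ∈ SL(2,ℂ)` with eigenvalues `l, l⁻¹`, `|l| > 1`, they are the corresponding eigenlines. -/
def IsAttrRep (α : PSL2C) (pp pm : P1) : Prop :=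
  ∃ A : SL2C, projPSL A = α ∧ ∃ l : ℂ, 1 < ‖l‖ ∧
    ∃ (v w : Fin 2 → ℂ) (hv : v ≠ 0) (hw : w ≠ 0),
      (A : Matrix (Fin 2) (Fin 2) ℂ) *ᵥ v = l • v ∧
      (A : Matrix (Fin 2) (Fin 2) ℂ) *ᵥ w = l⁻¹ • w ∧
      pp = Projectivization.mk ℂ v hv ∧ pm = Projectivization.mk ℂ w hw

/-!
Γ acts on two copies `Γ₂ ⊕ Γ₂` of Γ₂, a model of the two cosets of `ι Γ₂`: the generator
`q_{i+1}` swaps the sheets, multiplying by `dᵢ` on the way out and by `dᵢ⁻¹` on the way back,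
where `dᵢ = q2MulPreimage i` satisfies `ι dᵢ = q₂ q_{i+1}`. Every such swap is an involution, and
`q₁⋯q₆ = 1` reduces to the surface relation. On the first sheet `ι g` acts as left multiplication
by `g`; hence ι is injective, and `q₂`, which moves the first sheet to the second, is not in its
image. As `q₂ qᵢ ∈ ι Γ₂` for every generator, each element `g` of Γ has `g` or `q₂ g` in `ι Γ₂`,
so the index is 2.
-/

namespace Subgroup

variable {G : Type*} [Group G]

theorem mul_mem_or_mem_of_closure_eq_top {S : Set G} (hS : closure S = ⊤) {H : Subgroup G}
    {s : G} (hsS : ∀ t ∈ S, s * t ∈ H) (hSs : ∀ t ∈ S, t * s⁻¹ ∈ H) (g : G) :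
    s * g ∈ H ∨ g ∈ H := by
  have hg : g ∈ closure S := hS ▸ mem_top g
  induction hg using closure_induction_left with
  | one => exact .inr H.one_mem
  | mul_left t ht y _ ih =>
    rcases ih with hy | hy
    · exact .inr (by simpa [mul_assoc] using H.mul_mem (hSs t ht) hy)
    · exact .inl (by simpa [mul_assoc] using H.mul_mem (hsS t ht) hy)
  | inv_mul_cancel t ht y _ ih =>
    rcases ih with hy | hy
    · exact .inr (by simpa [mul_assoc] using H.mul_mem (H.inv_mem (hsS t ht)) hy)
    · exact .inl (by simpa [mul_assoc] using H.mul_mem (H.inv_mem (hSs t ht)) hy)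

end Subgroup

section Sheets

variable {N X : Type*} [Group N]

theorem perm_apply_eq_mul_of_closure_eq_top {S : Set N} (hS : Subgroup.closure S = ⊤)
    (F : N →* Equiv.Perm X) (e : N → X) (hF : ∀ a ∈ S, ∀ h, F a (e h) = e (a * h))
    (g h : N) : F g (e h) = e (g * h) := by
  have hg : g ∈ Subgroup.closure S := hS ▸ Subgroup.mem_top g
  induction hg using Subgroup.closure_induction_left generalizing h with
  | one => simp
  | mul_left a ha y _ ih => simp [ih, hF a ha, mul_assoc]
  | inv_mul_cancel a ha y _ ih =>
    rw [map_mul, Equiv.Perm.mul_apply, ih, map_inv, Equiv.Perm.inv_eq_iff_eq, hF a ha,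
      mul_assoc, mul_inv_cancel_left]

def sheetSwap (d : N) : Equiv.Perm (N ⊕ N) :=
  Function.Involutive.toPerm (Sum.elim (fun h ↦ .inr (d * h)) (fun h ↦ .inl (d⁻¹ * h)))
    (by rintro (h | h) <;> simp)

@[simp]
theorem sheetSwap_inl (d h : N) : sheetSwap d (.inl h) = .inr (d * h) := rfl

@[simp]
theorem sheetSwap_inr (d h : N) : sheetSwap d (.inr h) = .inl (d⁻¹ * h) := rfl

theorem sheetSwap_mul_self (d : N) : sheetSwap d * sheetSwap d = 1 := by
  ext (h | h) <;> simp

end Sheets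

theorem comm_a1_b1_eq_comm_b2_a2 : b1⁻¹ * a1⁻¹ * b1 * a1 = a2⁻¹ * b2⁻¹ * a2 * b2 := by
  have h : b2⁻¹ * a2⁻¹ * b2 * a2 * (b1⁻¹ * a1⁻¹ * b1 * a1) = 1 := by
    have hrel : (PresentedGroup.mk _ (surfaceRel 2) : Gamma2) = 1 :=
      (QuotientGroup.eq_one_iff _).mpr (Subgroup.subset_normalClosure rfl)
    simp only [surfaceRel_two, commF, map_mul, map_inv] at hrel
    exact hrel
  rw [eq_inv_of_mul_eq_one_right h]
  group

theorem qgen_inv (i : Fin 6) : (qgen i)⁻¹ = qgen i :=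
  inv_eq_of_mul_eq_one_right (qgen_mul_self i)

theorem qgen_prod_reverse_rotate :
    qgen 2 * qgen 1 * qgen 0 * qgen 5 * qgen 4 * qgen 3 = 1 := by
  rw [← inv_eq_one]
  simp only [_root_.mul_inv_rev, qgen_inv]
  calc _ = (qgen 0 * qgen 1 * qgen 2)⁻¹ *
        (qgen 0 * (qgen 1 * (qgen 2 * (qgen 3 * (qgen 4 * qgen 5))))) *
        (qgen 0 * qgen 1 * qgen 2) := by group
    _ = 1 := by rw [qgen_prod]; group

theorem iota_of (x : Fin 2 × Bool) : iota (PresentedGroup.of x) = pentMap x :=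
  PresentedGroup.toGroup.of _

theorem iota_a1 : iota a1 = qgen 1 * qgen 0 := iota_of _
theorem iota_b1 : iota b1 = qgen 1 * qgen 2 := iota_of _
theorem iota_a2 : iota a2 = qgen 4 * qgen 3 := iota_of _
theorem iota_b2 : iota b2 = qgen 4 * qgen 5 := iota_of _

def q2MulPreimage : Fin 6 → Gamma2 :=
  ![a1, 1, b1, b1 * a1 * b2⁻¹, b1 * a1 * b2⁻¹ * a2⁻¹, b1 * a1 * b2⁻¹ * a2⁻¹ * b2]

def sheetAction : GammaP →* Equiv.Perm (Gamma2 ⊕ Gamma2) :=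
  PresentedGroup.toGroup (f := fun i ↦ sheetSwap (q2MulPreimage i)) (by
    rintro r (⟨i, rfl⟩ | rfl)
    · simp [sheetSwap_mul_self]
    · have hrel : a1 * b1 * (a2⁻¹ * b2⁻¹ * a2 * b2) * a1⁻¹ * b1⁻¹ = 1 := by
        rw [← comm_a1_b1_eq_comm_b2_a2]
        group
      ext (h | h)
      · simp [List.finRange_succ, q2MulPreimage, mul_assoc]
      · simpa [List.finRange_succ, q2MulPreimage, mul_assoc] using congrArg (· * h) hrel)

theorem sheetAction_qgen (i : Fin 6) : sheetAction (qgen i) = sheetSwap (q2MulPreimage i) :=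
  PresentedGroup.toGroup.of _

theorem sheetAction_iota_inl (g h : Gamma2) : sheetAction (iota g) (.inl h) = .inl (g * h) := by
  refine perm_apply_eq_mul_of_closure_eq_top (PresentedGroup.closure_range_of _)
    (sheetAction.comp iota) Sum.inl ?_ g h
  rintro _ ⟨⟨i, b⟩, rfl⟩ h
  fin_cases i <;> cases b <;>
    simp [iota_of, pentMap, sheetAction_qgen, q2MulPreimage, a1, b1, a2, b2, sgA, sgB, mul_assoc]

theorem iota_injective : Function.Injective iota := fun g g' hg => by
  have h := sheetAction_iota_inl g 1
  rw [hg, sheetAction_iota_inl g' 1] at h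
  simpa using h.symm

theorem iota_q2MulPreimage (i : Fin 6) : iota (q2MulPreimage i) = qgen 1 * qgen i := by
  have h3 : iota (b1 * a1 * b2⁻¹) = qgen 1 * qgen 3 := by
    rw [← mul_inv_eq_one]
    simp only [map_mul, map_inv, iota_a1, iota_b1, iota_b2, _root_.mul_inv_rev, qgen_inv]
    calc _ = qgen 1 * (qgen 2 * qgen 1 * qgen 0 * qgen 5 * qgen 4 * qgen 3) * qgen 1 := by group
      _ = 1 := by rw [qgen_prod_reverse_rotate, mul_one, qgen_mul_self]
  fin_cases i
  · exact iota_a1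
  · exact (map_one iota).trans (qgen_mul_self 1).symm
  · exact iota_b1
  · exact h3
  · show iota (b1 * a1 * b2⁻¹ * a2⁻¹) = qgen 1 * qgen 4
    rw [map_mul, h3, map_inv, iota_a2, _root_.mul_inv_rev, mul_assoc, mul_inv_cancel_left,
      qgen_inv]
  · show iota (b1 * a1 * b2⁻¹ * a2⁻¹ * b2) = qgen 1 * qgen 5
    rw [map_mul, map_mul, h3, map_inv, iota_a2, iota_b2]
    group

theorem qgen_one_not_mem_range_iota : qgen 1 ∉ iota.range := by
  rintro ⟨g, hg⟩
  simpa [hg, sheetAction_qgen] using sheetAction_iota_inl g 1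

theorem index_range_iota : iota.range.index = 2 := by
  refine Subgroup.index_eq_two_iff_exists_notMem_and'.mpr
    ⟨qgen 1, qgen_one_not_mem_range_iota,
      Subgroup.mul_mem_or_mem_of_closure_eq_top (PresentedGroup.closure_range_of _) ?_ ?_⟩
  · rintro _ ⟨i, rfl⟩
    exact ⟨_, iota_q2MulPreimage i⟩
  · rintro _ ⟨i, rfl⟩
    refine ⟨(q2MulPreimage i)⁻¹, ?_⟩
    rw [map_inv, iota_q2MulPreimage, _root_.mul_inv_rev, qgen_inv, qgen_inv]
    rfl

/-- `ι : Γ₂ → Γ` is a well-defined homomorphism with the prescribed values on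
generators; it is injective and its image has index 2. -/
theorem statement6 :
    iota a1 = qgen 1 * qgen 0 ∧ iota b1 = qgen 1 * qgen 2 ∧
    iota a2 = qgen 4 * qgen 3 ∧ iota b2 = qgen 4 * qgen 5 ∧
    Function.Injective iota ∧ iota.range.index = 2 :=
  ⟨iota_a1, iota_b1, iota_a2, iota_b2, iota_injective, index_range_iota⟩
end
end

section
/- Let ρ' : Γ → PSL(2,ℂ) be a group homomorphism such that ρ'(qᵢ) = 1 for at least two distinct indices i ∈ {1,…,6}. Then the homomorphism ρ' ∘ ι : Γ₂ → PSL(2,ℂ) is elementary. -/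
/- Common setup: PSL(2,ℂ), its action on ℙ¹(ℂ), loxodromic/parabolic/elliptic elements,
elementary subgroups, surface groups, the pentagon group Γ and the embedding ι. -/

noncomputable section

open Matrix

/-!
Lift the images of the `qᵢ` to `SL(2,ℂ)`: each lift is `1` or a traceless square root of `-1`,
and the lifts multiply to a scalar. Dropping the trivial ones leaves at most four traceless
square roots of `-1` with `abcd` scalar, so `d` is a multiple of `cba` and `tr(abc) = 0`.
For traceless `2 × 2` matrices the identity `xy + yx = tr(xy)` turns this trace condition into a
nonzero traceless `N` that commutes or anticommutes with `a`, `b`, `c` (the commutator of two of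
them that do not commute, or `a` itself), hence also with `d`. Such matrices permute the
eigenlines of `N`, of which there are one or two; so already `ρ'(Γ)` fixes a set of at most two
points of `ℙ¹(ℂ)`.
-/

open scoped LinearAlgebra.Projectivization Pointwise
open Finset

section

variable {A : Type*} [Ring A]

def CommutesUpToSign (t N : A) : Prop := t * N = N * t ∨ t * N = -(N * t)

namespace CommutesUpToSign

variable {s t N : A}

lemma one_left (N : A) : CommutesUpToSign 1 N := Or.inl (by rw [one_mul, mul_one])

lemma neg_left (h : CommutesUpToSign t N) : CommutesUpToSign (-t) N := by
  rcases h with h | h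
  · exact Or.inl (by rw [neg_mul, mul_neg, h])
  · exact Or.inr (by rw [neg_mul, mul_neg, h])

lemma smul_left {K : Type*} [CommSemiring K] [Algebra K A] (γ : K) (h : CommutesUpToSign t N) :
    CommutesUpToSign (γ • t) N := by
  rcases h with h | h
  · exact Or.inl (by rw [smul_mul_assoc, mul_smul_comm, h])
  · exact Or.inr (by rw [smul_mul_assoc, mul_smul_comm, h, smul_neg])

lemma mul_left (hs : CommutesUpToSign s N) (ht : CommutesUpToSign t N) :
    CommutesUpToSign (s * t) N := by
  rcases hs with hs | hs <;> rcases ht with ht | ht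
  · exact Or.inl (by rw [mul_assoc, ht, ← mul_assoc, hs, mul_assoc])
  · exact Or.inr (by rw [mul_assoc, ht, mul_neg, ← mul_assoc, hs, mul_assoc])
  · exact Or.inr (by rw [mul_assoc, ht, ← mul_assoc, hs, neg_mul, mul_assoc])
  · exact Or.inl (by rw [mul_assoc, ht, mul_neg, ← mul_assoc, hs, neg_mul, neg_neg, mul_assoc])

end CommutesUpToSign

lemma eq_neg_mul_of_mul_eq {a m p : A} (ha : a * a = -1) (h : a * m = p) : m = -(a * p) := by
  rw [← h, ← mul_assoc, ha, neg_one_mul, neg_neg]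

end

section TracelessTwoByTwo

variable {R : Type*} [CommRing R] {a b x y z : Matrix (Fin 2) (Fin 2) R}

lemma mul_self_eq_trace_smul_sub_det_smul_one (a : Matrix (Fin 2) (Fin 2) R) :
    a * a = a.trace • a - a.det • 1 := by
  ext i j
  fin_cases i <;> fin_cases j <;>
    simp [Matrix.mul_apply, Matrix.trace_fin_two, Matrix.det_fin_two] <;> ring

lemma mul_self_eq_neg_det_smul_one (ha : a.trace = 0) : a * a = (-a.det) • 1 := by
  rw [mul_self_eq_trace_smul_sub_det_smul_one, ha, zero_smul, zero_sub, neg_smul]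

lemma mul_add_mul_eq_trace_smul_one (ha : a.trace = 0) (hb : b.trace = 0) :
    a * b + b * a = (a * b).trace • 1 := by
  have ha' : a 1 1 = -a 0 0 := by rw [Matrix.trace_fin_two] at ha; linear_combination ha
  have hb' : b 1 1 = -b 0 0 := by rw [Matrix.trace_fin_two] at hb; linear_combination hb
  ext i j
  fin_cases i <;> fin_cases j <;> simp [Matrix.mul_apply, Matrix.trace_fin_two, ha', hb'] <;> ring

lemma mul_eq_neg_mul_of_trace_mul_eq_zero (ha : a.trace = 0) (hb : b.trace = 0)
    (h : (a * b).trace = 0) : a * b = -(b * a) := by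
  have h' := mul_add_mul_eq_trace_smul_one ha hb
  rw [h, zero_smul] at h'
  exact eq_neg_of_add_eq_zero_left h'

lemma trace_lie (a b : Matrix (Fin 2) (Fin 2) R) : ⁅a, b⁆.trace = 0 := by
  rw [Ring.lie_def, Matrix.trace_sub, Matrix.trace_mul_comm, sub_self]

lemma mul_lie_eq_neg_lie_mul (ha : a.trace = 0) : a * ⁅a, b⁆ = -(⁅a, b⁆ * a) := by
  rw [Ring.lie_def, eq_neg_iff_add_eq_zero]
  calc a * (a * b - b * a) + (a * b - b * a) * a = (a * a) * b - b * (a * a) := by noncomm_ring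
    _ = 0 := by
      rw [mul_self_eq_neg_det_smul_one ha, smul_mul_assoc, mul_smul_comm, one_mul, mul_one,
        sub_self]

lemma trace_mul_mul_cycle (x y z : Matrix (Fin 2) (Fin 2) R) :
    (x * (y * z)).trace = (z * (x * y)).trace := by
  rw [← mul_assoc, Matrix.trace_mul_comm]

lemma trace_mul_mul_swap (hx : x.trace = 0) (hy : y.trace = 0) (hz : z.trace = 0) :
    (x * (z * y)).trace = -(x * (y * z)).trace := by
  have h := congrArg (fun m => (x * m).trace) (mul_add_mul_eq_trace_smul_one hz hy)
  simp only [mul_add, Matrix.trace_add, mul_smul_comm, mul_one, Matrix.trace_smul, hx,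
    smul_zero] at h
  linear_combination h

lemma exists_commutesUpToSign_lie (hx : x.trace = 0) (hy : y.trace = 0) (hz : z.trace = 0)
    (hxy : x * y ≠ y * x) (h : (x * (y * z)).trace = 0) :
    ∃ N ≠ 0, N.trace = 0 ∧
      CommutesUpToSign x N ∧ CommutesUpToSign y N ∧ CommutesUpToSign z N := by
  -- `x` and `y` anticommute with `⁅x, y⁆` because their squares are scalar, and `z` does
  -- because `tr (z ⁅x, y⁆) = 2 tr (x y z) = 0`.
  refine ⟨⁅x, y⁆, by rwa [Ring.lie_def, sub_ne_zero], trace_lie x y,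
    Or.inr (mul_lie_eq_neg_lie_mul hx), Or.inr ?_, Or.inr ?_⟩
  · have hyx := mul_lie_eq_neg_lie_mul (b := x) hy
    rw [Ring.lie_def] at hyx ⊢
    rw [← neg_sub (y * x), mul_neg, neg_mul, hyx]
  · refine mul_eq_neg_mul_of_trace_mul_eq_zero hz (trace_lie x y) ?_
    rw [Ring.lie_def, mul_sub, Matrix.trace_sub, ← trace_mul_mul_cycle x y z,
      ← trace_mul_mul_cycle y x z, ← trace_mul_mul_cycle x z y, trace_mul_mul_swap hx hy hz, h,
      neg_zero, sub_zero]

lemma exists_commutesUpToSign_of_trace_mul_mul_eq_zero (hx : x.trace = 0) (hy : y.trace = 0)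
    (hz : z.trace = 0) (hx0 : x ≠ 0) (h : (x * (y * z)).trace = 0) :
    ∃ N ≠ 0, N.trace = 0 ∧
      CommutesUpToSign x N ∧ CommutesUpToSign y N ∧ CommutesUpToSign z N := by
  by_cases hxy : x * y = y * x
  · by_cases hxz : x * z = z * x
    · by_cases hyz : y * z = z * y
      · exact ⟨x, hx0, hx, Or.inl rfl, Or.inl hxy.symm, Or.inl hxz.symm⟩
      · obtain ⟨N, hN, hNtr, hyN, hzN, hxN⟩ := exists_commutesUpToSign_lie hy hz hx hyz
          (by rwa [trace_mul_mul_cycle])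
        exact ⟨N, hN, hNtr, hxN, hyN, hzN⟩
    · obtain ⟨N, hN, hNtr, hxN, hzN, hyN⟩ := exists_commutesUpToSign_lie hx hz hy hxz
        (by rw [trace_mul_mul_swap hx hy hz, h, neg_zero])
      exact ⟨N, hN, hNtr, hxN, hyN, hzN⟩
  · exact exists_commutesUpToSign_lie hx hy hz hxy h

end TracelessTwoByTwo

lemma List.prod_filter_ne_one {M : Type*} [Monoid M] [DecidableEq M] (L : List M) :
    (L.filter (· ≠ 1)).prod = L.prod := by
  induction L with
  | nil => rfl
  | cons a L ih => by_cases ha : a = 1 <;> simp_all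

lemma List.length_filter_ofFn {α : Type*} {n : ℕ} (p : α → Prop) [DecidablePred p]
    (t : Fin n → α) : ((List.ofFn t).filter p).length = #{k | p (t k)} := by
  rw [List.ofFn_eq_map, List.filter_map, List.length_map, Finset.card_def, Finset.filter_val,
    Fin.univ_def]
  rfl

lemma Finset.card_filter_ne_le_card_sub_two {α M : Type*} [Fintype α] [DecidableEq α]
    [DecidableEq M] {f : α → M} {m : M} {i j : α} (hij : i ≠ j) (hi : f i = m) (hj : f j = m) :
    #{k | f k ≠ m} ≤ Fintype.card α - 2 := calc
  _ ≤ #({i, j}ᶜ : Finset α) := Finset.card_le_card fun k hk => by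
    simp only [Finset.mem_filter, Finset.mem_univ, true_and] at hk
    simp only [Finset.mem_compl, Finset.mem_insert, Finset.mem_singleton]
    rintro (rfl | rfl)
    exacts [hk hi, hk hj]
  _ = Fintype.card α - 2 := by rw [Finset.card_compl, Finset.card_pair hij]

section InvolutionLifts

variable {K : Type*} [Field K] {t : Matrix (Fin 2) (Fin 2) K}

/-- An element of `SL(2)` whose square is `±1` is either `±1` or of this form, so these are the
lifts of the involutions of `PSL(2)`. -/
def IsInvolutionLift (t : Matrix (Fin 2) (Fin 2) K) : Prop := t.trace = 0 ∧ t * t = -1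

lemma IsInvolutionLift.ne_zero (h : IsInvolutionLift t) : t ≠ 0 := by
  rintro rfl
  simpa using h.2

variable {a b c d : Matrix (Fin 2) (Fin 2) K} {γ : K}

lemma exists_commutesUpToSign_of_mul_mul_eq_smul_one (ha : IsInvolutionLift a)
    (hb : IsInvolutionLift b) (h : a * (b * c) = γ • 1) :
    ∃ N ≠ 0, N.trace = 0 ∧
      CommutesUpToSign a N ∧ CommutesUpToSign b N ∧ CommutesUpToSign c N := by
  have hc := eq_neg_mul_of_mul_eq hb.2 (eq_neg_mul_of_mul_eq ha.2 h)
  obtain ⟨N, hN, hNtr, haN, hbN, -⟩ := exists_commutesUpToSign_of_trace_mul_mul_eq_zero ha.1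
    hb.1 (Matrix.trace_zero _ _) ha.ne_zero (by simp)
  refine ⟨N, hN, hNtr, haN, hbN, ?_⟩
  rw [hc]
  exact (hbN.mul_left
    ((haN.mul_left ((CommutesUpToSign.one_left N).smul_left γ)).neg_left)).neg_left

lemma exists_commutesUpToSign_of_mul_mul_mul_eq_smul_one (ha : IsInvolutionLift a)
    (hb : IsInvolutionLift b) (hc : IsInvolutionLift c) (hd : IsInvolutionLift d) (hγ : γ ≠ 0)
    (h : a * (b * (c * d)) = γ • 1) :
    ∃ N ≠ 0, N.trace = 0 ∧ CommutesUpToSign a N ∧ CommutesUpToSign b N ∧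
      CommutesUpToSign c N ∧ CommutesUpToSign d N := by
  have hd' := eq_neg_mul_of_mul_eq hc.2 (eq_neg_mul_of_mul_eq hb.2 (eq_neg_mul_of_mul_eq ha.2 h))
  have htr : (a * (b * c)).trace = 0 := by
    have h : γ = 0 ∨ (c * (b * a)).trace = 0 := by simpa [hd', Matrix.trace_smul] using hd.1
    rw [← trace_mul_mul_cycle b a c, ← trace_mul_mul_cycle a c b,
      trace_mul_mul_swap ha.1 hb.1 hc.1, neg_eq_zero] at h
    exact h.resolve_left hγ
  obtain ⟨N, hN, hNtr, haN, hbN, hcN⟩ := exists_commutesUpToSign_of_trace_mul_mul_eq_zero ha.1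
    hb.1 hc.1 ha.ne_zero htr
  refine ⟨N, hN, hNtr, haN, hbN, hcN, ?_⟩
  rw [hd']
  exact (hcN.mul_left (hbN.mul_left ((haN.mul_left
    ((CommutesUpToSign.one_left N).smul_left γ)).neg_left)).neg_left).neg_left

lemma exists_commutesUpToSign_of_prod_eq_smul_one {L : List (Matrix (Fin 2) (Fin 2) K)}
    (hL : ∀ t ∈ L, IsInvolutionLift t) (hlen : L.length ≤ 4) (hγ : γ ≠ 0)
    (hprod : L.prod = γ • 1) :
    ∃ N ≠ 0, N.trace = 0 ∧ ∀ t ∈ L, CommutesUpToSign t N := by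
  match L, hlen with
  | [], _ =>
    refine ⟨!![0, 1; 0, 0], fun h => ?_, by simp [Matrix.trace_fin_two], by simp⟩
    simpa using congrFun (congrFun h 0) 1
  | [a], _ =>
    obtain ⟨N, hN, hNtr, haN, -⟩ := exists_commutesUpToSign_of_trace_mul_mul_eq_zero
      (hL a (by simp)).1 (Matrix.trace_zero _ _) (Matrix.trace_zero _ _) (hL a (by simp)).ne_zero
      (by simp)
    exact ⟨N, hN, hNtr, by simp [haN]⟩
  | [a, b], _ =>
    obtain ⟨N, hN, hNtr, haN, hbN, -⟩ := exists_commutesUpToSign_of_trace_mul_mul_eq_zero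
      (hL a (by simp)).1 (hL b (by simp)).1 (Matrix.trace_zero _ _) (hL a (by simp)).ne_zero
      (by simp)
    exact ⟨N, hN, hNtr, by simp [haN, hbN]⟩
  | [a, b, c], _ =>
    obtain ⟨N, hN, hNtr, haN, hbN, hcN⟩ := exists_commutesUpToSign_of_mul_mul_eq_smul_one
      (hL a (by simp)) (hL b (by simp)) (by simpa using hprod)
    exact ⟨N, hN, hNtr, by simp [haN, hbN, hcN]⟩
  | [a, b, c, d], _ =>
    obtain ⟨N, hN, hNtr, haN, hbN, hcN, hdN⟩ := exists_commutesUpToSign_of_mul_mul_mul_eq_smul_one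
      (hL a (by simp)) (hL b (by simp)) (hL c (by simp)) (hL d (by simp)) hγ (by simpa using hprod)
    exact ⟨N, hN, hNtr, by simp [haN, hbN, hcN, hdN]⟩
  | _ :: _ :: _ :: _ :: _ :: _, h =>
    simp only [List.length_cons] at h
    omega

lemma exists_commutesUpToSign_of_ofFn_prod_eq_smul_one [DecidableEq K] {n : ℕ}
    {t : Fin n → Matrix (Fin 2) (Fin 2) K} (ht : ∀ k, t k = 1 ∨ IsInvolutionLift (t k))
    (hcard : #{k | t k ≠ 1} ≤ 4) (hγ : γ ≠ 0) (hprod : (List.ofFn t).prod = γ • 1) :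
    ∃ N ≠ 0, N.trace = 0 ∧ ∀ k, CommutesUpToSign (t k) N := by
  have hL : ∀ s ∈ (List.ofFn t).filter (· ≠ 1), IsInvolutionLift s := by
    intro s hs
    obtain ⟨hst, hs1⟩ := List.mem_filter.mp hs
    obtain ⟨k, rfl⟩ := List.mem_ofFn.mp hst
    exact (ht k).resolve_left (by simpa using hs1)
  obtain ⟨N, hN, hNtr, hLN⟩ := exists_commutesUpToSign_of_prod_eq_smul_one hL
    (by rwa [List.length_filter_ofFn]) hγ (by rw [List.prod_filter_ne_one, hprod])
  refine ⟨N, hN, hNtr, fun k => ?_⟩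
  by_cases hk : t k = 1
  · rw [hk]
    exact CommutesUpToSign.one_left N
  · exact hLN _ (List.mem_filter.mpr ⟨List.mem_ofFn.mpr ⟨k, rfl⟩, by simpa using hk⟩)

end InvolutionLifts

lemma Set.finite_and_ncard_le_two_of_forall {α : Type*} {s : Set α}
    (h : ∀ a ∈ s, ∀ b ∈ s, ∀ c ∈ s, a = b ∨ a = c ∨ b = c) : s.Finite ∧ s.ncard ≤ 2 := by
  have hsub : ∀ t ⊆ s, t.Finite → t.ncard ≤ 2 := fun t hts ht => by
    by_contra! h3
    obtain ⟨a, ha, b, hb, c, hc, hab, hac, hbc⟩ := (Set.two_lt_ncard ht).mp h3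
    rcases h a (hts ha) b (hts hb) c (hts hc) with h | h | h <;> contradiction
  have hfin : s.Finite := by
    by_contra hinf
    obtain ⟨t, hts, ht, ht3⟩ := Set.Infinite.exists_subset_ncard_eq hinf 3
    have := hsub t hts ht
    omega
  exact ⟨hfin, hsub s subset_rfl hfin⟩

section Eigenlines

variable {K : Type*} [Field K] {N : Matrix (Fin 2) (Fin 2) K}

def eigenlines (N : Matrix (Fin 2) (Fin 2) K) : Set (ℙ K (Fin 2 → K)) :=
  {x | ∃ (v : Fin 2 → K) (hv : v ≠ 0) (c : K), N *ᵥ v = c • v ∧ x = Projectivization.mk K v hv}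

lemma eigenlines_nonempty [IsAlgClosed K] (N : Matrix (Fin 2) (Fin 2) K) :
    (eigenlines N).Nonempty := by
  obtain ⟨c, hc⟩ := Module.End.exists_eigenvalue (Matrix.toLin' N)
  obtain ⟨v, hv⟩ := hc.exists_hasEigenvector
  exact ⟨_, v, hv.2, c, by simpa using hv.apply_eq_smul, rfl⟩

lemma eq_smul_one_of_mulVec_eq_smul {v w : Fin 2 → K} (hv : v ≠ 0) (hw : w ≠ 0)
    (hvw : Projectivization.mk K v hv ≠ Projectivization.mk K w hw) {c : K}
    (hNv : N *ᵥ v = c • v) (hNw : N *ᵥ w = c • w) : N = c • 1 := by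
  have hind : LinearIndependent K ![v, w] := by
    refine (LinearIndependent.pair_iff' hv).mpr fun a ha => hvw ?_
    exact ((Projectivization.mk_eq_mk_iff' K w v hw hv).mpr ⟨a, ha⟩).symm
  let B := basisOfLinearIndependentOfCardEqFinrank hind (by simp)
  apply Matrix.toLin'.injective
  refine B.ext fun i => ?_
  fin_cases i <;> simp [B, hNv, hNw]

lemma ne_smul_one_of_trace_eq_zero [NeZero (2 : K)] (hN : N ≠ 0) (htr : N.trace = 0) (c : K) :
    N ≠ c • 1 := by
  rintro rfl
  rw [Matrix.trace_smul, Matrix.trace_one, Fintype.card_fin, smul_eq_mul, mul_eq_zero] at htr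
  simp_all

lemma eigenlines_finite_and_ncard_le_two (hN : ∀ c : K, N ≠ c • 1) :
    (eigenlines N).Finite ∧ (eigenlines N).ncard ≤ 2 := by
  refine Set.finite_and_ncard_le_two_of_forall ?_
  rintro _ ⟨v, hv, c, hvc, rfl⟩ _ ⟨w, hw, d, hwd, rfl⟩ _ ⟨u, hu, e, hue, rfl⟩
  by_contra! h
  obtain ⟨hvw, hvu, hwu⟩ := h
  have hne : ∀ {v w : Fin 2 → K} (hv : v ≠ 0) (hw : w ≠ 0) {c d : K},
      Projectivization.mk K v hv ≠ Projectivization.mk K w hw →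
      N *ᵥ v = c • v → N *ᵥ w = d • w → c ≠ d := by
    rintro v w hv hw c d hvw hvc hwd rfl
    exact hN c (eq_smul_one_of_mulVec_eq_smul hv hw hvw hvc hwd)
  have hcd := hne hv hw hvw hvc hwd
  have hce := hne hv hu hvu hvc hue
  have hde := hne hw hu hwu hwd hue
  have hind := Module.End.eigenvectors_linearIndependent' (Matrix.toLin' N) ![c, d, e]
    (by intro i j hij; fin_cases i <;> fin_cases j <;> simp_all [eq_comm])
    ![v, w, u] (fun i => by
      fin_cases i <;> simp [Module.End.hasEigenvector_iff, hv, hw, hu, hvc, hwd, hue])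
  simpa using hind.fintype_card_le_finrank

lemma CommutesUpToSign.smul_eigenlines_subset {A : Matrix.SpecialLinearGroup (Fin 2) K}
    (h : CommutesUpToSign (A : Matrix (Fin 2) (Fin 2) K) N) : A • eigenlines N ⊆ eigenlines N := by
  refine Set.smul_set_subset_iff.mpr ?_
  rintro _ ⟨v, hv, c, hvc, rfl⟩
  rw [Projectivization.smul_mk]
  rcases h with h | h
  · refine ⟨_, _, c, ?_, rfl⟩
    rw [Matrix.SpecialLinearGroup.smul_def, Matrix.smul_eq_mulVec, Matrix.mulVec_mulVec, ← h,
      ← Matrix.mulVec_mulVec, hvc, Matrix.mulVec_smul]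
  · refine ⟨_, _, -c, ?_, rfl⟩
    rw [Matrix.SpecialLinearGroup.smul_def, Matrix.smul_eq_mulVec, Matrix.mulVec_mulVec,
      ← neg_neg (N * _), ← h, Matrix.neg_mulVec, ← Matrix.mulVec_mulVec, hvc, Matrix.mulVec_smul,
      neg_smul]

end Eigenlines

lemma smul_set_eq_of_smul_set_subset_of_mul_self_eq_one {G α : Type*} [Group G] [MulAction G α]
    {g : G} {S : Set α} (hgS : g • S ⊆ S) (hg : g * g = 1) : g • S = S :=
  hgS.antisymm <| calc
    S = (g * g) • S := by rw [hg, one_smul]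
    _ = g • g • S := mul_smul g g S
    _ ⊆ g • S := Set.smul_set_mono hgS

lemma PresentedGroup.range_le_of_forall_of_mem {α G : Type*} [Group G] {rels : Set (FreeGroup α)}
    (f : PresentedGroup rels →* G) {H : Subgroup G} (h : ∀ a, f (PresentedGroup.of a) ∈ H) :
    f.range ≤ H := by
  rw [MonoidHom.range_eq_map, ← PresentedGroup.closure_range_of, MonoidHom.map_closure,
    Subgroup.closure_le]
  rintro _ ⟨_, ⟨a, rfl⟩, rfl⟩
  exact h a

lemma pslAct_image_eq_smul (g : PSL2C) (S : Set P1) : pslAct g '' S = g • S := by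
  have h : pslAct g = (g • ·) := funext fun x => by
    induction x using Projectivization.ind with
    | h v hv =>
      conv_rhs => rw [← QuotientGroup.out_eq' g]
      rfl
  rw [h]
  rfl

lemma coe_eq_smul_one_of_projPSL_eq_one {A : SL2C} (hA : projPSL A = 1) :
    ∃ r : ℂ, r ^ 2 = 1 ∧ (A : Matrix (Fin 2) (Fin 2) ℂ) = r • 1 := by
  obtain ⟨r, hr, hrA⟩ :=
    Matrix.SpecialLinearGroup.mem_center_iff.mp ((QuotientGroup.eq_one_iff A).mp hA)
  exact ⟨r, by simpa using hr, by rw [← hrA, Matrix.smul_one_eq_diagonal]; rfl⟩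

lemma projPSL_eq_one_of_coe_eq_smul_one {A : SL2C} {s : ℂ}
    (hA : (A : Matrix (Fin 2) (Fin 2) ℂ) = s • 1) : projPSL A = 1 := by
  refine (QuotientGroup.eq_one_iff A).mpr (Matrix.SpecialLinearGroup.mem_center_iff.mpr ⟨s, ?_, ?_⟩)
  · simpa [hA, Matrix.det_smul] using A.2
  · rw [hA, Matrix.smul_one_eq_diagonal]; rfl

lemma projPSL_ne_one_of_trace_eq_zero {A : SL2C} (hA : (A : Matrix (Fin 2) (Fin 2) ℂ).trace = 0) :
    projPSL A ≠ 1 := by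
  intro h
  obtain ⟨r, hr, hrA⟩ := coe_eq_smul_one_of_projPSL_eq_one h
  rw [hrA, Matrix.trace_smul, Matrix.trace_one] at hA
  simp_all

lemma exists_lift_of_mul_self_eq_one {g : PSL2C} (hg : g * g = 1) :
    ∃ A : SL2C, projPSL A = g ∧
      ((A : Matrix (Fin 2) (Fin 2) ℂ) = 1 ∨ IsInvolutionLift (A : Matrix (Fin 2) (Fin 2) ℂ)) := by
  obtain ⟨A, rfl⟩ := QuotientGroup.mk'_surjective _ g
  by_cases hA : projPSL A = 1
  · exact ⟨1, by rw [map_one, ← hA]; rfl, Or.inl rfl⟩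
  refine ⟨A, rfl, Or.inr ?_⟩
  obtain ⟨r, -, hr⟩ := coe_eq_smul_one_of_projPSL_eq_one (A := A * A) (by rw [map_mul]; exact hg)
  have hch := mul_self_eq_trace_smul_sub_det_smul_one (A : Matrix (Fin 2) (Fin 2) ℂ)
  rw [A.2, ← Matrix.SpecialLinearGroup.coe_mul, hr, one_smul] at hch
  have htr : (A : Matrix (Fin 2) (Fin 2) ℂ).trace = 0 := by
    by_contra htr
    refine hA (projPSL_eq_one_of_coe_eq_smul_one
      (s := (A : Matrix (Fin 2) (Fin 2) ℂ).trace⁻¹ * (r + 1)) ?_)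
    rw [mul_smul, add_smul, one_smul, hch, sub_add_cancel, inv_smul_smul₀ htr]
  refine ⟨htr, ?_⟩
  rw [← Matrix.SpecialLinearGroup.coe_mul, hr, hch, htr, zero_smul, zero_sub]

/-- if `ρ' : Γ → PSL(2,ℂ)` kills at least two of the `qᵢ`, then `ρ' ∘ ι` is
elementary. -/
theorem statement8 (ρ' : GammaP →* PSL2C)
    (h : ∃ i j : Fin 6, i ≠ j ∧ ρ' (qgen i) = 1 ∧ ρ' (qgen j) = 1) :
    IsElementarySubgroup (ρ'.comp iota).range := by
  obtain ⟨i, j, hij, hi, hj⟩ := h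
  have hsq : ∀ k, ρ' (qgen k) * ρ' (qgen k) = 1 := fun k => by
    rw [← map_mul, qgen_mul_self, map_one]
  choose X hXg hX using fun k => exists_lift_of_mul_self_eq_one (hsq k)
  have hX1 : ∀ k, ρ' (qgen k) = 1 → (X k : Matrix (Fin 2) (Fin 2) ℂ) = 1 := fun k hk =>
    (hX k).resolve_right fun hinv => projPSL_ne_one_of_trace_eq_zero hinv.1 ((hXg k).trans hk)
  have hcard : #{k | (X k : Matrix (Fin 2) (Fin 2) ℂ) ≠ 1} ≤ 4 :=
    Finset.card_filter_ne_le_card_sub_two hij (hX1 i hi) (hX1 j hj)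
  have hrel : projPSL (X 0 * (X 1 * (X 2 * (X 3 * (X 4 * X 5))))) = 1 := by
    simpa only [map_mul, map_one, ← hXg] using congrArg ρ' qgen_prod
  obtain ⟨γ, hγ, hprod⟩ := coe_eq_smul_one_of_projPSL_eq_one hrel
  obtain ⟨N, hN, hNtr, hXN⟩ := exists_commutesUpToSign_of_ofFn_prod_eq_smul_one hX hcard
    (γ := γ) (by rintro rfl; simp at hγ) (by simpa [List.ofFn_succ] using hprod)
  have hstab : ρ'.range ≤ MulAction.stabilizer PSL2C (eigenlines N) :=
    PresentedGroup.range_le_of_forall_of_mem ρ' fun k =>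
      smul_set_eq_of_smul_set_subset_of_mul_self_eq_one
        (show ρ' (qgen k) • eigenlines N ⊆ eigenlines N by
          rw [← hXg k]; exact (hXN k).smul_eigenlines_subset) (hsq k)
  obtain ⟨hfin, hle⟩ := eigenlines_finite_and_ncard_le_two (ne_smul_one_of_trace_eq_zero hN hNtr)
  refine Or.inl ⟨eigenlines N, eigenlines_nonempty N, hfin, hle, ?_⟩
  rintro _ ⟨w, rfl⟩
  rw [pslAct_image_eq_smul]
  exact hstab ⟨iota w, rfl⟩
end
end

section
/- Let ρ : F₂ → PSL(2,ℂ) be a non-elementary group homomorphism and suppose there exists a primitive element γ ∈ F₂ such that ρ(γ) is loxodromic or parabolic. Then there exist elements x, y ∈ F₂ such that {x, y} generates F₂ and both ρ(x) and ρ(y) are loxodromic. -/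
/- Common setup: PSL(2,ℂ), its action on ℙ¹(ℂ), loxodromic/parabolic/elliptic elements,
elementary subgroups, surface groups, the pentagon group Γ and the embedding ι. -/

noncomputable section

open Matrix

/-!
After an automorphism of `F₂` we may take `γ = a`. Lift `ρ a`, `ρ b` to `A, B ∈ SL(2,ℂ)`
and conjugate `A` to `diag(λ, λ⁻¹)` with `|λ| > 1` (loxodromic case) or to `!![1, c; 0, 1]`
with `c ≠ 0` (parabolic case, for the lift of trace `2`). In these coordinates
`tr (A ^ n * B)` is `λ ^ n B₀₀ + λ ^ (-n) B₁₁`, resp. `B₀₀ + B₁₁ + n c B₁₀`. So unless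
these entries of `B` vanish, `|tr (A ^ n * B)| → ∞` as `n → +∞` or as `n → -∞`, and some
consecutive `a ^ n b`, `a ^ (n + 1) b` are both loxodromic; this pair generates `F₂`.
If the entries vanish, `B` swaps the two fixed points of `A`, resp. fixes the fixed point
of `A`, so `ρ(F₂)` preserves a set of at most two points of `ℙ¹(ℂ)` and is elementary.
-/

open Filter Pointwise

local notation "M₂" => Matrix (Fin 2) (Fin 2) ℂ

namespace Matrix.SpecialLinearGroup

open MatrixGroups

variable {F : Type*} [Field F]

lemma smul_single_one (C : SL(2, F)) (j : Fin 2) : C • Pi.single j 1 = fun i => C i j := by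
  rw [SpecialLinearGroup.smul_def, smul_eq_mulVec, mulVec_single_one]
  rfl

lemma diag2_mul (a b : F) (ha : a ≠ 0) (hb : b ≠ 0) :
    diag2 a ha * diag2 b hb = diag2 (a * b) (mul_ne_zero ha hb) := by
  ext i j
  fin_cases i <;> fin_cases j <;> simp [diag2_coe', mul_comm]

lemma diag2_zpow (a : F) (ha : a ≠ 0) (n : ℤ) :
    diag2 a ha ^ n = diag2 (a ^ n) (zpow_ne_zero n ha) := by
  let diagHom : Fˣ →* SL(2, F) :=
    MonoidHom.mk' (fun u => diag2 (u : F) u.ne_zero) fun u v => (diag2_mul _ _ _ _).symm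
  simpa [diagHom] using (map_zpow diagHom (Units.mk0 a ha) n).symm

lemma transvection_zpow {ι : Type*} [Fintype ι] [DecidableEq ι] {i j : ι} (hij : i ≠ j)
    (b : F) (n : ℤ) : transvection hij b ^ n = transvection hij (n * b) := by
  let transvectionHom : Multiplicative F →* SpecialLinearGroup ι F :=
    MonoidHom.mk' (fun x => transvection hij x.toAdd) fun x y => transvection_add hij _ _
  simpa [transvectionHom, ← ofAdd_zsmul] using (map_zpow transvectionHom (.ofAdd b) n).symm

lemma exists_smul_eq_smul_of_add_inv_eq_trace (A : SL(2, F)) {a : F} (ha : a ≠ 0)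
    (htr : a + a⁻¹ = trace (A : Matrix (Fin 2) (Fin 2) F)) :
    ∃ v : Fin 2 → F, v ≠ 0 ∧ A • v = a • v := by
  have hdet : det ((A : Matrix (Fin 2) (Fin 2) F) - a • 1) = 0 := by
    have h1 := A.det_coe
    rw [det_fin_two] at h1 ⊢
    rw [trace_fin_two] at htr
    simp only [sub_apply, smul_apply, one_apply_eq, one_apply_ne zero_ne_one,
      one_apply_ne one_ne_zero, smul_eq_mul, mul_one, mul_zero, sub_zero]
    field_simp at htr
    linear_combination h1 + htr
  obtain ⟨v, hv, hAv⟩ := exists_mulVec_eq_zero_iff.2 hdet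
  refine ⟨v, hv, ?_⟩
  rw [sub_mulVec, sub_eq_zero, smul_mulVec, one_mulVec] at hAv
  rwa [SpecialLinearGroup.smul_def, smul_eq_mulVec]

lemma exists_smul_single_zero_eq {v : Fin 2 → F} (hv : v ≠ 0) :
    ∃ P : SL(2, F), P • (Pi.single 0 1 : Fin 2 → F) = v := by
  have hcop : IsCoprime (v 0) (v 1) := EuclideanDomain.isCoprime_of_dvd
    (fun h => hv (funext fun i => by fin_cases i <;> simp [h.1, h.2]))
    fun z hz hz0 => absurd (isUnit_iff_ne_zero.2 hz0) hz
  obtain ⟨P, h0, h1⟩ := hcop.exists_SL2_col 0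
  refine ⟨P, ?_⟩
  rw [smul_single_one]
  funext i
  fin_cases i <;> simp [h0, h1]

def upperSL (a b : F) (ha : a ≠ 0) : SL(2, F) := ⟨!![a, b; 0, a⁻¹], by simp [ha]⟩

lemma coe_upperSL (a b : F) (ha : a ≠ 0) :
    (upperSL a b ha : Matrix (Fin 2) (Fin 2) F) = !![a, b; 0, a⁻¹] := rfl

lemma exists_eq_conj_upperSL (A : SL(2, F)) {a : F} (ha : a ≠ 0)
    (htr : a + a⁻¹ = trace (A : Matrix (Fin 2) (Fin 2) F)) :
    ∃ (P : SL(2, F)) (b : F), A = P * upperSL a b ha * P⁻¹ := by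
  obtain ⟨v, hv, hAv⟩ := exists_smul_eq_smul_of_add_inv_eq_trace A ha htr
  obtain ⟨P, hP⟩ := exists_smul_single_zero_eq hv
  have hU : (P⁻¹ * A * P) • (Pi.single 0 1 : Fin 2 → F) = a • Pi.single 0 1 := by
    rw [mul_smul, mul_smul, hP, hAv, smul_comm, ← hP, inv_smul_smul]
  have hU0 := congrFun hU 0
  have hU1 := congrFun hU 1
  rw [smul_single_one] at hU0 hU1
  obtain ⟨a', b, ha', hab⟩ :=
    fin_two_exists_eq_mk_of_apply_zero_one_eq_zero (P⁻¹ * A * P) (by simpa using hU1)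
  obtain rfl : a' = a := by simpa [hab] using hU0
  refine ⟨P, b, ?_⟩
  rw [upperSL, ← hab]
  group

lemma upperSL_one (b : F) : upperSL 1 b one_ne_zero = transvection zero_ne_one b := by
  ext i j
  fin_cases i <;> fin_cases j <;> simp [upperSL, transvection_coe]

lemma upperSL_eq_conj_diag2 {a : F} (ha : a ≠ 0) (ha2 : a ^ 2 ≠ 1) (b : F) :
    upperSL a b ha = transvection zero_ne_one (a * b / (1 - a ^ 2)) * diag2 a ha *
      (transvection zero_ne_one (a * b / (1 - a ^ 2)))⁻¹ := by
  have : 1 - a ^ 2 ≠ 0 := sub_ne_zero.2 ha2.symm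
  refine eq_mul_inv_of_mul_eq (Subtype.ext ?_)
  simp only [coe_mul, coe_upperSL, transvection_coe, diag2_coe']
  ext i j
  fin_cases i <;> fin_cases j <;> simp [mul_apply, Fin.sum_univ_two, single_apply]
  field_simp
  ring

lemma exists_eq_conj_transvection {A : SL(2, F)} (hA : A ≠ 1)
    (htr : trace (A : Matrix (Fin 2) (Fin 2) F) = 2) :
    ∃ (P : SL(2, F)) (b : F), b ≠ 0 ∧ A = P * transvection zero_ne_one b * P⁻¹ := by
  obtain ⟨P, b, rfl⟩ := exists_eq_conj_upperSL A one_ne_zero (by rw [htr]; norm_num)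
  rw [upperSL_one] at hA ⊢
  refine ⟨P, b, fun hb => hA ?_, rfl⟩
  rw [hb, transvection_coeff_zero, mul_one, mul_inv_cancel]

lemma exists_eq_conj_diag2 (A : SL(2, F)) {a : F} (ha : a ≠ 0) (ha2 : a ^ 2 ≠ 1)
    (htr : a + a⁻¹ = trace (A : Matrix (Fin 2) (Fin 2) F)) :
    ∃ P : SL(2, F), A = P * diag2 a ha * P⁻¹ := by
  obtain ⟨P, b, rfl⟩ := exists_eq_conj_upperSL A ha htr
  refine ⟨P * transvection zero_ne_one (a * b / (1 - a ^ 2)), ?_⟩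
  rw [upperSL_eq_conj_diag2 ha ha2]
  group

lemma trace_diag2_mul (a : F) (ha : a ≠ 0) (C : SL(2, F)) :
    trace (↑(diag2 a ha * C) : Matrix (Fin 2) (Fin 2) F) = a * C 0 0 + a⁻¹ * C 1 1 := by
  rw [coe_mul, diag2_coe', trace_fin_two]
  simp [mul_apply, Fin.sum_univ_two]

lemma trace_transvection_mul (b : F) (C : SL(2, F)) :
    trace (↑(transvection (zero_ne_one' (Fin 2)) b * C) : Matrix (Fin 2) (Fin 2) F) =
      C 0 0 + C 1 1 + b * C 1 0 := by
  simp [coe_mul, transvection_coe, trace_fin_two, mul_apply, Fin.sum_univ_two, single_apply]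
  ring

end Matrix.SpecialLinearGroup

lemma Projectivization.smul_mk_eq_mk {G K V : Type*} [AddCommGroup V] [DivisionRing K] [Module K V]
    [Group G] [DistribMulAction G V] [SMulCommClass G K V] (g : G) {v w : V} (hv : v ≠ 0)
    (hw : w ≠ 0) {c : K} (h : g • v = c • w) : g • mk K v hv = mk K w hw := by
  rw [smul_mk, mk_eq_mk_iff']
  exact ⟨c, h.symm⟩

lemma Subgroup.closure_zpow_succ_mul_pair {G : Type*} [Group G] (a b : G) (n : ℤ) :
    closure {a ^ (n + 1) * b, a ^ n * b} = closure {a, b} := by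
  have ha : a ∈ closure {a, b} := subset_closure (Set.mem_insert _ _)
  have hb : b ∈ closure {a, b} := subset_closure (Set.mem_insert_of_mem _ rfl)
  have hx : a ^ (n + 1) * b ∈ closure {a ^ (n + 1) * b, a ^ n * b} :=
    subset_closure (Set.mem_insert _ _)
  have hy : a ^ n * b ∈ closure {a ^ (n + 1) * b, a ^ n * b} :=
    subset_closure (Set.mem_insert_of_mem _ rfl)
  have hxy : a ∈ closure {a ^ (n + 1) * b, a ^ n * b} := by
    have := mul_mem hx (inv_mem hy)
    rwa [show a ^ (n + 1) * b * (a ^ n * b)⁻¹ = a by group] at this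
  refine le_antisymm ((closure_le _).2 (Set.pair_subset_iff.2 ⟨?_, ?_⟩))
    ((closure_le _).2 (Set.pair_subset_iff.2 ⟨hxy, ?_⟩))
  · exact mul_mem (zpow_mem ha _) hb
  · exact mul_mem (zpow_mem ha _) hb
  · have := mul_mem (zpow_mem hxy (-n)) hy
    rwa [show a ^ (-n) * (a ^ n * b) = b by group] at this

lemma Subgroup.closure_pair_map_eq_top {G H : Type*} [Group G] [Group H] (e : G ≃* H) {x y : G}
    (h : closure {x, y} = ⊤) : closure {e x, e y} = ⊤ := by
  rw [← Set.image_pair, ← e.coe_toMonoidHom, ← MonoidHom.map_closure, h,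
    Subgroup.map_top_of_surjective _ e.surjective]

lemma FreeGroup.closure_of_zero_of_one :
    Subgroup.closure {of 0, of 1} = (⊤ : Subgroup (FreeGroup (Fin 2))) := by
  rw [← FreeGroup.closure_range_of]
  congr
  ext x
  simp [Fin.exists_fin_two, eq_comm]

lemma tendsto_zpow_atTop_atTop_of_one_lt {r : ℝ} (hr : 1 < r) :
    Tendsto (fun n : ℤ => r ^ n) atTop atTop := by
  refine tendsto_atTop_atTop.2 fun b => ?_
  obtain ⟨N, hN⟩ := pow_unbounded_of_one_lt b hr
  exact ⟨N, fun n hn => hN.le.trans (by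
    simpa only [zpow_natCast] using zpow_le_zpow_right₀ hr.le hn)⟩

lemma tendsto_norm_zpow_mul_add_inv_zpow_mul {𝕜 : Type*} [NormedField 𝕜] {a : 𝕜}
    (ha : 1 < ‖a‖) {p : 𝕜} (hp : p ≠ 0) (s : 𝕜) :
    Tendsto (fun n : ℤ => ‖a ^ n * p + (a ^ n)⁻¹ * s‖) atTop atTop := by
  refine tendsto_atTop_mono' atTop ?_ (((tendsto_zpow_atTop_atTop_of_one_lt ha).atTop_mul_const
    (norm_pos_iff.2 hp)).atTop_add (tendsto_const_nhds (x := -‖s‖)))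
  filter_upwards [eventually_ge_atTop 0] with n hn
  have hs : ‖(a ^ n)⁻¹ * s‖ ≤ ‖s‖ := by
    rw [norm_mul, norm_inv, norm_zpow]
    exact mul_le_of_le_one_left (norm_nonneg s) (inv_le_one_of_one_le₀ (one_le_zpow₀ ha.le hn))
  have := norm_sub_norm_le (a ^ n * p) (-((a ^ n)⁻¹ * s))
  rw [norm_neg, sub_neg_eq_add, norm_mul, norm_zpow] at this
  linarith

lemma tendsto_norm_add_intCast_mul {p q : ℂ} (hq : q ≠ 0) :
    Tendsto (fun n : ℤ => ‖p + n * q‖) atTop atTop := by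
  refine tendsto_atTop_mono' atTop ?_ ((tendsto_intCast_atTop_atTop.atTop_mul_const
    (norm_pos_iff.2 hq)).atTop_add (tendsto_const_nhds (x := -‖p‖)))
  filter_upwards [eventually_ge_atTop 0] with n hn
  have := norm_sub_norm_le ((n : ℂ) * q) (-p)
  rw [norm_neg, sub_neg_eq_add, norm_mul, Complex.norm_intCast,
    abs_of_nonneg (Int.cast_nonneg hn), add_comm] at this
  linarith

lemma exists_one_lt_norm_add_inv_eq {t : ℂ}
    (ht : ¬ ∃ r : ℝ, 0 ≤ r ∧ r ≤ 4 ∧ t ^ 2 = r) :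
    ∃ a : ℂ, 1 < ‖a‖ ∧ a + a⁻¹ = t := by
  obtain ⟨s, hs⟩ := IsAlgClosed.exists_eq_mul_self (t ^ 2 - 4)
  have hx : (t + s) / 2 * ((t - s) / 2) = 1 := by linear_combination hs / 4
  set x := (t + s) / 2
  have hx0 : x ≠ 0 := left_ne_zero_of_mul_eq_one hx
  have hsum : x + x⁻¹ = t := by rw [inv_eq_of_mul_eq_one_right hx]; ring
  have hnorm : ‖x‖ ≠ 1 := by
    intro h1
    refine ht ⟨(2 * x.re) ^ 2, by positivity, ?_, ?_⟩
    · nlinarith [abs_le.1 (h1 ▸ Complex.abs_re_le_norm x)]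
    · -- on the unit circle `x⁻¹ = conj x`, so `t = x + x⁻¹ = 2 re x`
      have hinv : x⁻¹ = (starRingEnd ℂ) x := by
        rw [Complex.inv_def, Complex.normSq_eq_norm_sq, h1]
        simp
      rw [← hsum, hinv, Complex.add_conj]
      push_cast
      ring
  rcases hnorm.lt_or_gt with hlt | hgt
  · refine ⟨x⁻¹, ?_, by rw [inv_inv, add_comm, hsum]⟩
    rwa [norm_inv, one_lt_inv₀ (norm_pos_iff.2 hx0)]
  · exact ⟨x, hgt, hsum⟩

lemma pslAct_eq_smul (g : PSL2C) (x : P1) : pslAct g x = g • x := by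
  induction x using Projectivization.ind with
  | h v hv =>
    conv_rhs => rw [← Quotient.out_eq g]
    rfl

lemma projPSL_surjective : Function.Surjective projPSL := QuotientGroup.mk'_surjective _

lemma trSq_projPSL (A : SL2C) : trSq (projPSL A) = trace (A : M₂) ^ 2 := by
  obtain ⟨⟨z, hz⟩, hout⟩ := QuotientGroup.mk_out_eq_mul (Subgroup.center SL2C) A
  obtain ⟨r, hr, hrz⟩ := Matrix.SpecialLinearGroup.mem_center_iff.1 hz
  rw [trSq, projPSL, QuotientGroup.mk'_apply, hout, Matrix.SpecialLinearGroup.coe_mul, ← hrz,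
    scalar_apply, ← smul_one_eq_diagonal, Matrix.mul_smul, Matrix.mul_one, trace_smul,
    smul_eq_mul, mul_pow, show r ^ 2 = 1 from hr, one_mul]

lemma projPSL_neg (A : SL2C) : projPSL (-A) = projPSL A := by
  rw [projPSL, QuotientGroup.mk'_apply, QuotientGroup.mk'_apply, QuotientGroup.eq]
  refine Matrix.SpecialLinearGroup.mem_center_iff.2 ⟨-1, by norm_num, ?_⟩
  ext i j
  fin_cases i <;> fin_cases j <;> simp

lemma isLoxodromic_projPSL {A : SL2C} (h : 2 < ‖trace (A : M₂)‖) :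
    IsLoxodromic (projPSL A) := by
  rintro ⟨r, hr0, hr4, hr⟩
  rw [trSq_projPSL] at hr
  have : ‖trace (A : M₂)‖ ^ 2 = r := by
    rw [← norm_pow, hr, Complex.norm_real, Real.norm_of_nonneg hr0]
  nlinarith [norm_nonneg (trace (A : M₂))]

lemma IsParabolic.exists_trace_eq_two {g : PSL2C} (hg : IsParabolic g) :
    ∃ A : SL2C, projPSL A = g ∧ A ≠ 1 ∧ trace (A : M₂) = 2 := by
  obtain ⟨A, rfl⟩ := projPSL_surjective g
  have hA : trace (A : M₂) = 2 ∨ trace (A : M₂) = -2 := by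
    rw [← sq_eq_sq_iff_eq_or_eq_neg, ← trSq_projPSL, hg.2]
    norm_num
  rcases hA with hA | hA
  · exact ⟨A, rfl, fun h1 => hg.1 (by rw [h1, map_one]), hA⟩
  · refine ⟨-A, projPSL_neg A, fun h1 => hg.1 ?_, ?_⟩
    · rw [← projPSL_neg, h1, map_one]
    · rw [Matrix.SpecialLinearGroup.coe_neg, trace_neg, hA, neg_neg]

def PreserveSmallSet (A B : SL2C) : Prop :=
  ∃ S : Set P1, S.Nonempty ∧ S.Finite ∧ S.ncard ≤ 2 ∧ A • S = S ∧ B • S = S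

lemma PreserveSmallSet.conj {A B : SL2C} (h : PreserveSmallSet A B) (P : SL2C) :
    PreserveSmallSet (P * A * P⁻¹) (P * B * P⁻¹) := by
  obtain ⟨S, hne, hfin, hcard, hA, hB⟩ := h
  refine ⟨P • S, hne.smul_set, hfin.smul_set, by rwa [Set.ncard_smul_set], ?_, ?_⟩
  · rw [smul_smul, inv_mul_cancel_right, mul_smul, hA]
  · rw [smul_smul, inv_mul_cancel_right, mul_smul, hB]

lemma not_isNonElem_of_preserveSmallSet {H : Type*} [Group H] (ρ : H →* PSL2C) {x y : H}
    (hxy : Subgroup.closure {x, y} = ⊤) {A B : SL2C} (hA : projPSL A = ρ x)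
    (hB : projPSL B = ρ y) (hAB : PreserveSmallSet A B) : ¬ IsNonElem ρ := by
  obtain ⟨S, hne, hfin, hcard, hAS, hBS⟩ := hAB
  have hrange : ρ.range ≤ MulAction.stabilizer PSL2C S := by
    rw [MonoidHom.range_eq_map, ← hxy, MonoidHom.map_closure, Subgroup.closure_le,
      Set.image_pair, Set.pair_subset_iff, ← hA, ← hB]
    exact ⟨hAS, hBS⟩
  refine not_not.2 (Or.inl ⟨S, hne, hfin, hcard, fun g hg => ?_⟩)
  simpa only [funext (pslAct_eq_smul g), Set.image_smul] using
    MulAction.mem_stabilizer_iff.1 (hrange hg)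

def HasLargeTracePair (A B : SL2C) : Prop :=
  ∃ n : ℤ, 2 < ‖trace (↑(A ^ n * B) : M₂)‖ ∧
    2 < ‖trace (↑(A ^ (n + 1) * B) : M₂)‖

lemma hasLargeTracePair_of_tendsto {A B : SL2C} {L : Filter ℤ} [L.NeBot]
    (hL : Tendsto (· + 1) L L)
    (h : Tendsto (fun n : ℤ => ‖trace (↑(A ^ n * B) : M₂)‖) L atTop) :
    HasLargeTracePair A B :=
  ((h.eventually_gt_atTop 2).and (hL.eventually (h.eventually_gt_atTop 2))).exists

lemma trace_conj (P X : SL2C) : trace (↑(P * X * P⁻¹) : M₂) = trace (X : M₂) := by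
  rw [Matrix.SpecialLinearGroup.coe_mul, trace_mul_comm, ← Matrix.SpecialLinearGroup.coe_mul,
    inv_mul_cancel_left]

lemma HasLargeTracePair.conj {A B : SL2C} (h : HasLargeTracePair A B) (P : SL2C) :
    HasLargeTracePair (P * A * P⁻¹) (P * B * P⁻¹) := by
  have hconj (n : ℤ) : (P * A * P⁻¹) ^ n * (P * B * P⁻¹) = P * (A ^ n * B) * P⁻¹ := by
    rw [conj_zpow]
    group
  simpa only [HasLargeTracePair, hconj, trace_conj] using h

section NormalForms

open Matrix.SpecialLinearGroup Projectivization

lemma preserveSmallSet_diag2 {a : ℂ} (ha : a ≠ 0) {C : SL2C} (h0 : C 0 0 = 0) (h1 : C 1 1 = 0) :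
    PreserveSmallSet (diag2 a ha) C := by
  have he₀ : (Pi.single 0 1 : Fin 2 → ℂ) ≠ 0 := by simp
  have he₁ : (Pi.single 1 1 : Fin 2 → ℂ) ≠ 0 := by simp
  have hC₀ : C • mk ℂ _ he₀ = mk ℂ _ he₁ := smul_mk_eq_mk C he₀ he₁ (c := C 1 0) (by
    rw [smul_single_one]; funext i; fin_cases i <;> simp [h0])
  have hC₁ : C • mk ℂ _ he₁ = mk ℂ _ he₀ := smul_mk_eq_mk C he₁ he₀ (c := C 0 1) (by
    rw [smul_single_one]; funext i; fin_cases i <;> simp [h1])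
  refine ⟨{mk ℂ _ he₀, mk ℂ _ he₁}, Set.insert_nonempty _ _, Set.toFinite _,
    (Set.ncard_insert_le _ _).trans (by simp), ?_, ?_⟩
  · rw [Set.smul_set_insert, Set.smul_set_singleton,
      smul_mk_eq_mk _ he₀ he₀ (diag2_smul_single_i₁ ha),
      smul_mk_eq_mk _ he₁ he₁ (diag2_smul_single_i₂ ha)]
  · rw [Set.smul_set_insert, Set.smul_set_singleton, hC₀, hC₁, Set.pair_comm]

lemma preserveSmallSet_transvection (b : ℂ) {C : SL2C} (h : C 1 0 = 0) :
    PreserveSmallSet (transvection (zero_ne_one' (Fin 2)) b) C := by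
  have he₀ : (Pi.single 0 1 : Fin 2 → ℂ) ≠ 0 := by simp
  refine ⟨{mk ℂ _ he₀}, Set.singleton_nonempty _, Set.toFinite _, by simp, ?_, ?_⟩
  · rw [Set.smul_set_singleton, smul_mk_eq_mk _ he₀ he₀ (c := 1)
      (by rw [one_smul]; exact transvection_smul_single_fst _ b)]
  · rw [Set.smul_set_singleton, smul_mk_eq_mk C he₀ he₀ (c := C 0 0) (by
      rw [smul_single_one]; funext i; fin_cases i <;> simp [h])]

lemma hasLargeTracePair_or_preserveSmallSet_diag2 {a : ℂ} (ha : a ≠ 0) (ha1 : 1 < ‖a‖)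
    (C : SL2C) : HasLargeTracePair (diag2 a ha) C ∨ PreserveSmallSet (diag2 a ha) C := by
  have htr (n : ℤ) :
      trace (↑(diag2 a ha ^ n * C) : M₂) = a ^ n * C 0 0 + (a ^ n)⁻¹ * C 1 1 := by
    rw [diag2_zpow, trace_diag2_mul]
  by_cases h0 : C 0 0 = 0
  · by_cases h1 : C 1 1 = 0
    · exact .inr (preserveSmallSet_diag2 ha h0 h1)
    refine .inl (hasLargeTracePair_of_tendsto (tendsto_atBot_add_const_right _ 1 tendsto_id) ?_)
    refine ((tendsto_norm_zpow_mul_add_inv_zpow_mul ha1 h1 (C 0 0)).comp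
      tendsto_neg_atBot_atTop).congr fun n => ?_
    rw [Function.comp_apply, htr, _root_.zpow_neg, inv_inv, add_comm]
  · refine .inl (hasLargeTracePair_of_tendsto (tendsto_atTop_add_const_right _ 1 tendsto_id) ?_)
    simpa only [htr] using tendsto_norm_zpow_mul_add_inv_zpow_mul ha1 h0 (C 1 1)

lemma hasLargeTracePair_or_preserveSmallSet_transvection {b : ℂ} (hb : b ≠ 0) (C : SL2C) :
    HasLargeTracePair (transvection (zero_ne_one' (Fin 2)) b) C ∨
      PreserveSmallSet (transvection (zero_ne_one' (Fin 2)) b) C := by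
  by_cases h : C 1 0 = 0
  · exact .inr (preserveSmallSet_transvection b h)
  refine .inl (hasLargeTracePair_of_tendsto (tendsto_atTop_add_const_right _ 1 tendsto_id) ?_)
  refine (tendsto_norm_add_intCast_mul (p := C 0 0 + C 1 1) (mul_ne_zero hb h)).congr
    fun n => ?_
  rw [transvection_zpow, trace_transvection_mul, mul_assoc]

end NormalForms

lemma hasLargeTracePair_or_preserveSmallSet_conj {D : SL2C}
    (h : ∀ C, HasLargeTracePair D C ∨ PreserveSmallSet D C) (P B : SL2C) :
    HasLargeTracePair (P * D * P⁻¹) B ∨ PreserveSmallSet (P * D * P⁻¹) B := by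
  rw [show B = P * (P⁻¹ * B * P) * P⁻¹ by group]
  exact (h _).imp (·.conj P) (·.conj P)

lemma hasLargeTracePair_or_preserveSmallSet_of_isLoxodromic {A : SL2C}
    (hA : IsLoxodromic (projPSL A)) (B : SL2C) :
    HasLargeTracePair A B ∨ PreserveSmallSet A B := by
  obtain ⟨a, ha1, htr⟩ := exists_one_lt_norm_add_inv_eq (t := trace (A : M₂))
    (by simpa only [IsLoxodromic, trSq_projPSL] using hA)
  have ha : a ≠ 0 := norm_pos_iff.1 (one_pos.trans ha1)
  have ha2 : a ^ 2 ≠ 1 := fun h => by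
    have := congrArg norm h
    rw [norm_pow, norm_one] at this
    nlinarith
  obtain ⟨P, rfl⟩ := Matrix.SpecialLinearGroup.exists_eq_conj_diag2 A ha ha2 htr
  exact hasLargeTracePair_or_preserveSmallSet_conj
    (hasLargeTracePair_or_preserveSmallSet_diag2 ha ha1) _ B

lemma hasLargeTracePair_or_preserveSmallSet_of_trace_eq_two {A : SL2C} (hA : A ≠ 1)
    (htr : trace (A : M₂) = 2) (B : SL2C) :
    HasLargeTracePair A B ∨ PreserveSmallSet A B := by
  obtain ⟨P, b, hb, rfl⟩ := Matrix.SpecialLinearGroup.exists_eq_conj_transvection hA htr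
  exact hasLargeTracePair_or_preserveSmallSet_conj
    (hasLargeTracePair_or_preserveSmallSet_transvection hb) P B

/-- if some primitive element has loxodromic or parabolic image, then there is a
generating pair with loxodromic images. -/
theorem statement11 (ρ : FreeGroup (Fin 2) →* PSL2C) (h : IsNonElem ρ)
    (hγ : ∃ γ : FreeGroup (Fin 2), IsPrimitiveF2 γ ∧
      (IsLoxodromic (ρ γ) ∨ IsParabolic (ρ γ))) :
    ∃ x y : FreeGroup (Fin 2), Subgroup.closure {x, y} = (⊤ : Subgroup (FreeGroup (Fin 2))) ∧
      IsLoxodromic (ρ x) ∧ IsLoxodromic (ρ y) := by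
  obtain ⟨_, ⟨φ, rfl⟩, hγ⟩ := hγ
  obtain ⟨A, hA, hAB⟩ : ∃ A : SL2C, projPSL A = ρ (φ (.of 0)) ∧
      ∀ B, HasLargeTracePair A B ∨ PreserveSmallSet A B := by
    rcases hγ with hlox | hpar
    · obtain ⟨A, hA⟩ := projPSL_surjective (ρ (φ (.of 0)))
      exact ⟨A, hA, hasLargeTracePair_or_preserveSmallSet_of_isLoxodromic (hA ▸ hlox)⟩
    · obtain ⟨A, hA, hA1, htr⟩ := hpar.exists_trace_eq_two
      exact ⟨A, hA, hasLargeTracePair_or_preserveSmallSet_of_trace_eq_two hA1 htr⟩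
  obtain ⟨B, hB⟩ := projPSL_surjective (ρ (φ (.of 1)))
  have hgen := Subgroup.closure_pair_map_eq_top φ FreeGroup.closure_of_zero_of_one
  rcases hAB B with ⟨n, hn, hn1⟩ | hsmall
  · have hword (k : ℤ) : ρ (φ (.of 0 ^ k * .of 1)) = projPSL (A ^ k * B) := by
      simp [hA, hB]
    refine ⟨φ (.of 0 ^ (n + 1) * .of 1), φ (.of 0 ^ n * .of 1), ?_, ?_, ?_⟩
    · rw [map_mul, map_mul, map_zpow, map_zpow, Subgroup.closure_zpow_succ_mul_pair, hgen]
    · rw [hword]; exact isLoxodromic_projPSL hn1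
    · rw [hword]; exact isLoxodromic_projPSL hn
  · exact absurd h (not_isNonElem_of_preserveSmallSet ρ hgen hA hB hsmall)
end
end

section
/- Let α, β ∈ PSL(2,ℂ) be loxodromic and suppose α sends a fixed point of β to the other. Then β sends a fixed point of α to the other if and only if tr²(α) = tr²(β). -/
/- Common setup: PSL(2,ℂ), its action on ℙ¹(ℂ), loxodromic/parabolic/elliptic elements,
elementary subgroups, surface groups, the pentagon group Γ and the embedding ι. -/

noncomputable section

open Matrix

/-!
In a basis of eigenvectors of `h ∈ SL(2,ℂ)`, with eigenvalues `λ, λ⁻¹`, the element `g` sends a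
fixed point of `h` to the other exactly when one of its diagonal entries `a, d` vanishes. Since
`tr g = a + d` and `tr (g h) = λ a + λ⁻¹ d`, the condition `a d = 0` reads
`tr² g + tr² (g h) - tr g tr h tr (g h) = 0`. The last two terms are symmetric in `g` and `h`,
so when `α` sends a fixed point of `β` to the other, `β` does the same for `α` exactly when
`tr² α = tr² β`.
-/

def wedge (u z : Fin 2 → ℂ) : ℂ := u 0 * z 1 - u 1 * z 0

lemma wedge_anticomm (u z : Fin 2 → ℂ) : wedge z u = -wedge u z := by
  unfold wedge; ring

lemma wedge_self (u : Fin 2 → ℂ) : wedge u u = 0 := by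
  unfold wedge; ring

lemma wedge_smul_left (c : ℂ) (u z : Fin 2 → ℂ) : wedge (c • u) z = c * wedge u z := by
  simp only [wedge, Pi.smul_apply, smul_eq_mul]; ring

lemma wedge_smul_right (c : ℂ) (u z : Fin 2 → ℂ) : wedge u (c • z) = c * wedge u z := by
  simp only [wedge, Pi.smul_apply, smul_eq_mul]; ring

lemma wedge_mulVec_mulVec (M : Matrix (Fin 2) (Fin 2) ℂ) (u z : Fin 2 → ℂ) :
    wedge (M *ᵥ u) (M *ᵥ z) = M.det * wedge u z := by
  simp only [wedge, mulVec, dotProduct, Fin.sum_univ_two, det_fin_two]; ring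

lemma wedge_mulVec_add_wedge_mulVec (M : Matrix (Fin 2) (Fin 2) ℂ) (u z : Fin 2 → ℂ) :
    wedge (M *ᵥ u) z + wedge u (M *ᵥ z) = M.trace * wedge u z := by
  simp only [wedge, mulVec, dotProduct, Fin.sum_univ_two, trace_fin_two]; ring

lemma wedge_eq_zero_iff {u : Fin 2 → ℂ} (hu : u ≠ 0) (z : Fin 2 → ℂ) :
    wedge u z = 0 ↔ ∃ c : ℂ, c • u = z := by
  refine ⟨fun h ↦ ?_, fun ⟨c, hc⟩ ↦ by rw [← hc, wedge_smul_right, wedge_self, mul_zero]⟩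
  unfold wedge at h
  obtain ⟨i, hi⟩ := Function.ne_iff.mp hu
  refine ⟨z i / u i, funext fun j ↦ ?_⟩
  fin_cases i <;> fin_cases j <;>
    simp only [Fin.zero_eta, Fin.mk_one, Fin.isValue, Pi.zero_apply, ne_eq, Pi.smul_apply,
      smul_eq_mul] at hi ⊢ <;> field_simp <;> first | linear_combination h | linear_combination -h

lemma Projectivization.mk_eq_mk_iff_wedge_eq_zero {u z : Fin 2 → ℂ} (hu : u ≠ 0) (hz : z ≠ 0) :
    Projectivization.mk ℂ u hu = Projectivization.mk ℂ z hz ↔ wedge u z = 0 := by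
  rw [mk_eq_mk_iff', ← wedge_eq_zero_iff hz, wedge_anticomm, neg_eq_zero]

section Eigen

variable {M : Matrix (Fin 2) (Fin 2) ℂ} {l m : ℂ} {v w : Fin 2 → ℂ}

lemma exists_mulVec_eq_smul_of_sq_sub_trace_mul_add_det
    (hl : l ^ 2 - M.trace * l + M.det = 0) : ∃ v ≠ 0, M *ᵥ v = l • v := by
  have hdet : (M - l • 1).det = 0 := by
    simp only [det_fin_two, trace_fin_two] at hl ⊢
    simp only [Matrix.sub_apply, Matrix.smul_apply, one_apply_eq, one_apply_ne, smul_eq_mul,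
      mul_one, mul_zero, sub_zero, ne_eq, zero_ne_one, one_ne_zero, not_false_eq_true]
    linear_combination hl
  obtain ⟨v, hv, hMv⟩ := exists_mulVec_eq_zero_iff.mpr hdet
  refine ⟨v, hv, ?_⟩
  rwa [sub_mulVec, smul_mulVec, one_mulVec, sub_eq_zero] at hMv

lemma exists_eigenvectors_of_trace_sq_ne_four (hdet : M.det = 1) (ht : M.trace ^ 2 ≠ 4) :
    ∃ l m : ℂ, l ≠ m ∧ ∃ v w : Fin 2 → ℂ, v ≠ 0 ∧ w ≠ 0 ∧ M *ᵥ v = l • v ∧ M *ᵥ w = m • w := by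
  obtain ⟨s, hs⟩ := IsAlgClosed.exists_pow_nat_eq (M.trace ^ 2 - 4) two_pos
  have hs0 : s ≠ 0 := by
    rintro rfl
    exact ht (by linear_combination -hs)
  obtain ⟨v, hv, hMv⟩ := exists_mulVec_eq_smul_of_sq_sub_trace_mul_add_det (M := M)
    (l := (M.trace + s) / 2) (by rw [hdet]; linear_combination hs / 4)
  obtain ⟨w, hw, hMw⟩ := exists_mulVec_eq_smul_of_sq_sub_trace_mul_add_det (M := M)
    (l := (M.trace - s) / 2) (by rw [hdet]; linear_combination hs / 4)
  refine ⟨_, _, fun h ↦ hs0 ?_, v, w, hv, hw, hMv, hMw⟩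
  linear_combination h

lemma wedge_ne_zero_of_eigenvectors (hv : v ≠ 0) (hw : w ≠ 0) (hMv : M *ᵥ v = l • v)
    (hMw : M *ᵥ w = m • w) (hlm : l ≠ m) : wedge v w ≠ 0 := by
  intro h
  obtain ⟨c, rfl⟩ := (wedge_eq_zero_iff hv w).mp h
  rw [mulVec_smul, hMv, smul_comm] at hMw
  have : (l - m) • c • v = 0 := by rw [sub_smul, sub_eq_zero, hMw]
  exact hw ((smul_eq_zero.mp this).resolve_left (sub_ne_zero.mpr hlm))

lemma wedge_eq_zero_or_wedge_eq_zero_of_mulVec_eq_smul (hdet : M.det = 1)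
    (hMv : M *ᵥ v = l • v) (hMw : M *ᵥ w = m • w) (hlm : l ≠ m) {u : Fin 2 → ℂ} {d : ℂ}
    (hMu : M *ᵥ u = d • u) : wedge u w = 0 ∨ wedge v u = 0 := by
  have huw := wedge_mulVec_mulVec M u w
  have hvu := wedge_mulVec_mulVec M v u
  rw [hMu, hMw, hdet, wedge_smul_left, wedge_smul_right] at huw
  rw [hMv, hMu, hdet, wedge_smul_left, wedge_smul_right] at hvu
  by_contra! ⟨huw0, hvu0⟩
  have hdm : d * m - 1 = 0 :=
    (mul_eq_zero.mp (by linear_combination huw : (d * m - 1) * wedge u w = 0)).resolve_right huw0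
  have hld : l * d - 1 = 0 :=
    (mul_eq_zero.mp (by linear_combination hvu : (l * d - 1) * wedge v u = 0)).resolve_right hvu0
  exact hlm (by linear_combination m * hld - l * hdm)

end Eigen

abbrev outMatrix (g : PSL2C) : Matrix (Fin 2) (Fin 2) ℂ := (Quotient.out g : SL2C)

lemma IsLoxodromic.trSq_ne_four {g : PSL2C} (hg : IsLoxodromic g) : trSq g ≠ 4 :=
  fun h ↦ hg ⟨4, by norm_num, le_rfl, by rw [h]; norm_num⟩

lemma pslAct_mk_eq_mk_iff (g : PSL2C) {u z : Fin 2 → ℂ} (hu : u ≠ 0) (hz : z ≠ 0) :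
    pslAct g (Projectivization.mk ℂ u hu) = Projectivization.mk ℂ z hz ↔
      wedge (outMatrix g *ᵥ u) z = 0 := by
  unfold pslAct
  rw [Projectivization.map_mk, Projectivization.mk_eq_mk_iff_wedge_eq_zero]
  rfl

lemma pslAct_eq_self_iff (h : PSL2C) {l m : ℂ} {v w : Fin 2 → ℂ} (hv : v ≠ 0) (hw : w ≠ 0)
    (hBv : outMatrix h *ᵥ v = l • v) (hBw : outMatrix h *ᵥ w = m • w) (hlm : l ≠ m) (x : P1) :
    pslAct h x = x ↔ x = Projectivization.mk ℂ v hv ∨ x = Projectivization.mk ℂ w hw := by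
  refine Projectivization.ind (fun u hu ↦ ?_) x
  rw [pslAct_mk_eq_mk_iff, Projectivization.mk_eq_mk_iff_wedge_eq_zero,
    Projectivization.mk_eq_mk_iff_wedge_eq_zero]
  constructor
  · intro hfix
    rw [wedge_anticomm, neg_eq_zero, wedge_eq_zero_iff hu] at hfix
    obtain ⟨d, hd⟩ := hfix
    rcases wedge_eq_zero_or_wedge_eq_zero_of_mulVec_eq_smul (Quotient.out h).prop hBv hBw hlm
      hd.symm with huw | hvu
    · exact Or.inr huw
    · rw [wedge_anticomm, neg_eq_zero] at hvu
      exact Or.inl hvu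
  · have hfixed {z : Fin 2 → ℂ} {k : ℂ} (hz : z ≠ 0) (hBz : outMatrix h *ᵥ z = k • z)
        (huz : wedge u z = 0) : wedge (outMatrix h *ᵥ u) u = 0 := by
      rw [wedge_anticomm, neg_eq_zero, wedge_eq_zero_iff hz] at huz
      obtain ⟨c, rfl⟩ := huz
      rw [mulVec_smul, hBz, smul_comm, wedge_smul_left, wedge_self, mul_zero]
    rintro (huv | huw)
    · exact hfixed hv hBv huv
    · exact hfixed hw hBw huw

lemma sendsFixedToOther_iff_of_fixedPoints {g h : PSL2C} {p q : P1} (hpq : p ≠ q)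
    (hfix : ∀ x, pslAct h x = x ↔ x = p ∨ x = q) :
    SendsFixedToOther g h ↔ pslAct g p = q ∨ pslAct g q = p := by
  constructor
  · rintro ⟨p', q', hpq', hp', hq', hswap⟩
    rcases (hfix p').mp hp' with rfl | rfl <;> rcases (hfix q').mp hq' with rfl | rfl
    all_goals first | exact absurd rfl hpq' | tauto
  · intro hswap
    exact ⟨p, q, hpq, (hfix p).mpr (Or.inl rfl), (hfix q).mpr (Or.inr rfl), hswap⟩

/-- For `A, B ∈ SL(2,ℂ)` this equals `tr [A, B] - tr² B + 2`, by the Fricke trace identity. -/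
def swapDefect (A B : Matrix (Fin 2) (Fin 2) ℂ) : ℂ :=
  A.trace ^ 2 + (A * B).trace ^ 2 - A.trace * B.trace * (A * B).trace

lemma swapDefect_sub_swapDefect (A B : Matrix (Fin 2) (Fin 2) ℂ) :
    swapDefect A B - swapDefect B A = A.trace ^ 2 - B.trace ^ 2 := by
  rw [swapDefect, swapDefect, trace_mul_comm B A]
  ring

theorem sendsFixedToOther_iff_swapDefect_eq_zero (g h : PSL2C) (hh : trSq h ≠ 4) :
    SendsFixedToOther g h ↔ swapDefect (outMatrix g) (outMatrix h) = 0 := by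
  obtain ⟨l, m, hlm, v, w, hv, hw, hBv, hBw⟩ :=
    exists_eigenvectors_of_trace_sq_ne_four (M := outMatrix h) (Quotient.out h).prop hh
  have hΔ := wedge_ne_zero_of_eigenvectors hv hw hBv hBw hlm
  have hvw : Projectivization.mk ℂ v hv ≠ Projectivization.mk ℂ w hw := by
    rwa [Ne, Projectivization.mk_eq_mk_iff_wedge_eq_zero]
  rw [sendsFixedToOther_iff_of_fixedPoints hvw (pslAct_eq_self_iff h hv hw hBv hBw hlm),
    pslAct_mk_eq_mk_iff, pslAct_mk_eq_mk_iff, wedge_anticomm v, neg_eq_zero]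
  set A := outMatrix g
  set B := outMatrix h
  have hdetB := wedge_mulVec_mulVec B v w
  rw [hBv, hBw, (Quotient.out h).prop, wedge_smul_left, wedge_smul_right] at hdetB
  have htrB := wedge_mulVec_add_wedge_mulVec B v w
  rw [hBv, hBw, wedge_smul_left, wedge_smul_right] at htrB
  have htrA := wedge_mulVec_add_wedge_mulVec A v w
  have htrAB := wedge_mulVec_add_wedge_mulVec (A * B) v w
  rw [← mulVec_mulVec, ← mulVec_mulVec, hBv, hBw, mulVec_smul, mulVec_smul, wedge_smul_left,
    wedge_smul_right] at htrAB
  -- `wedge (A v) w` and `wedge v (A w)` are `wedge v w` times the diagonal entries of `A`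
  -- in the eigenbasis `(v, w)` of `B`.
  have key : (l - m) ^ 2 * (wedge (A *ᵥ v) w * wedge v (A *ᵥ w)) =
      -wedge v w ^ 2 * swapDefect A B := by
    unfold swapDefect
    linear_combination ((l * A.trace - (A * B).trace) * wedge v w) * (htrAB - m * htrA)
      + ((l - m) * wedge (A *ᵥ v) w) * (l * htrA - htrAB)
      + wedge v w * A.trace * (A * B).trace * htrB - wedge v w * A.trace ^ 2 * hdetB
  rw [← mul_eq_zero, ← mul_right_inj' (pow_ne_zero 2 (sub_ne_zero.mpr hlm)), key, mul_zero,
    mul_eq_zero, neg_eq_zero, or_iff_right (pow_ne_zero 2 hΔ)]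

/-- if loxodromic `α` sends a fixed point of loxodromic `β` to the other, then `β`
sends a fixed point of `α` to the other iff `tr²(α) = tr²(β)`. -/
theorem statement18 (α β : PSL2C) (hα : IsLoxodromic α) (hβ : IsLoxodromic β)
    (h : SendsFixedToOther α β) :
    SendsFixedToOther β α ↔ trSq α = trSq β := by
  rw [sendsFixedToOther_iff_swapDefect_eq_zero β α hα.trSq_ne_four]
  rw [sendsFixedToOther_iff_swapDefect_eq_zero α β hβ.trSq_ne_four] at h
  have hsub := swapDefect_sub_swapDefect (outMatrix α) (outMatrix β)
  unfold trSq
  constructor <;> intro h' <;> linear_combination h - h' - hsub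
end
end
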